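/- arXiv:math/0501037 — 4 statements merged into one kernel-verified Lean document; each statement's English description precedes it below -/
import Mathlib

section
/- Let V : ℝ³ → ℝ be measurable with finite global Kato norm ‖V‖_K. Then for every positive integer k, sup over x₀, x_{k+1} ∈ ℝ³ of ∫_{ℝ^{3k}} [ (∏_{j=1}^k |V(x_j)|) / (∏_{j=0}^k |x_j − x_{j+1}|) ] · ( Σ_{ℓ=0}^k |x_ℓ − x_{ℓ+1}| ) dx₁ ⋯ dx_k ≤ (k+1) ‖V‖_K^k. -/
/-!
Expanding `∑ₗ |xₗ - xₗ₊₁|` splits the integrand into `k + 1` terms. In the `l`-th term the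
link `l` cancels, and what is left is a product over the other links in which each link before
`l` carries the weight `|V(x_{j+1})| / |x_j - x_{j+1}|` and each link after `l` the weight
`|V(x_j)| / |x_j - x_{j+1}|`. Integrating out `x₁` (when `l ≥ 1`) or `x_k` (when `l = 0`) then
removes one factor `∫ |V(x)| / |a - x| dx ≤ ‖V‖_K` and leaves a term of the same shape with one
point fewer, so each of the `k + 1` terms is at most `‖V‖_K ^ k`.
-/

open MeasureTheory

/-- The chain `x₀, x₁, …, x_k, x_{k+1}` of points: `chain k x0 xk1 y i` equals `x0` for
`i = 0`, `y (i-1)` for `1 ≤ i ≤ k`, and `xk1` for `i ≥ k+1`. -/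
noncomputable def chain {E : Type*} (k : ℕ) (x0 xk1 : E) (y : Fin k → E) : ℕ → E :=
  fun i => if i = 0 then x0 else if h : i - 1 < k then y ⟨i - 1, h⟩ else xk1

open Finset
open scoped ENNReal

section Chain

variable {E : Type*} {k : ℕ} {x0 xk1 : E} {y : Fin k → E}

@[simp]
lemma chain_zero : chain k x0 xk1 y 0 = x0 := rfl

@[simp]
lemma chain_succ_self : chain k x0 xk1 y (k + 1) = xk1 := by
  simp [chain]

lemma chain_cons_succ (x : E) (j : ℕ) :
    chain (k + 1) x0 xk1 (Fin.cons x y) (j + 1) = chain k x xk1 y j := by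
  rcases j with _ | j
  · simp [chain]
  · unfold chain
    by_cases h : j < k
    · simp [h, show j + 1 < k + 1 by omega, ← Fin.succ_mk]
    · simp [h, show ¬ j + 1 < k + 1 by omega]

lemma chain_snoc_of_le (x : E) {j : ℕ} (hj : j ≤ k + 1) :
    chain (k + 1) x0 xk1 (Fin.snoc y x) j = chain k x0 x y j := by
  unfold chain
  rcases j with _ | j
  · simp
  · by_cases h : j < k
    · simp [h, show j < k + 1 by omega, ← Fin.castSucc_mk]
    · obtain rfl : j = k := by omega
      simp [Fin.snoc]

lemma measurable_chain [MeasurableSpace E] (k j : ℕ) (x0 xk1 : E) :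
    Measurable fun y : Fin k → E => chain k x0 xk1 y j := by
  unfold chain
  split_ifs with h0 h1
  · exact measurable_const
  · exact measurable_pi_apply _
  · exact measurable_const

end Chain

lemma lintegral_pi_eq_lintegral_insertNth {E : Type*} [MeasureSpace E]
    [SigmaFinite (volume : Measure E)] {n : ℕ} (i : Fin (n + 1))
    {f : (Fin (n + 1) → E) → ℝ≥0∞} (hf : Measurable f) :
    ∫⁻ y, f y = ∫⁻ x, ∫⁻ y', f (Fin.insertNth i x y') := by
  have he := (volume_preserving_piFinSuccAbove (fun _ : Fin (n + 1) => E) i).symm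
  rw [← he.lintegral_comp hf, Measure.volume_eq_prod]
  exact lintegral_prod _ (hf.comp he.measurable).aemeasurable

section CutChain

variable {E : Type*}

noncomputable def cutChainWeight (K : E → E → ℝ≥0∞) (c : ℕ → E) (k l : ℕ) : ℝ≥0∞ :=
  ∏ j ∈ range (k + 1),
    if j < l then K (c j) (c (j + 1)) else if l < j then K (c (j + 1)) (c j) else 1

variable {K : E → E → ℝ≥0∞} {k : ℕ} {x0 xk1 : E}

lemma cutChainWeight_chain_cons (l : ℕ) (x : E) (y : Fin k → E) :
    cutChainWeight K (chain (k + 1) x0 xk1 (Fin.cons x y)) (k + 1) (l + 1) =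
      K x0 x * cutChainWeight K (chain k x xk1 y) k l := by
  rw [cutChainWeight, prod_range_succ']
  simp [chain_cons_succ, cutChainWeight, mul_comm]

lemma cutChainWeight_chain_snoc {l : ℕ} (hl : l ≤ k) (x : E) (y : Fin k → E) :
    cutChainWeight K (chain (k + 1) x0 xk1 (Fin.snoc y x)) (k + 1) l =
      cutChainWeight K (chain k x0 x y) k l * K xk1 x := by
  rw [cutChainWeight, prod_range_succ]
  congr 1
  · refine prod_congr rfl fun j hj => ?_
    have hj := mem_range.mp hj
    rw [chain_snoc_of_le x (by omega : j ≤ k + 1), chain_snoc_of_le x (by omega : j + 1 ≤ k + 1)]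
  · rw [if_neg (by omega), if_pos (by omega), chain_succ_self,
      chain_snoc_of_le x le_rfl, chain_succ_self]

lemma measurable_cutChainWeight_chain [MeasurableSpace E] (hK : Measurable (Function.uncurry K))
    (k l : ℕ) (x0 xk1 : E) :
    Measurable fun y : Fin k → E => cutChainWeight K (chain k x0 xk1 y) k l := by
  refine Finset.measurable_prod _ fun j _ => ?_
  split_ifs
  · exact hK.comp ((measurable_chain k j x0 xk1).prodMk (measurable_chain k (j + 1) x0 xk1))
  · exact hK.comp ((measurable_chain k (j + 1) x0 xk1).prodMk (measurable_chain k j x0 xk1))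
  · exact measurable_const

end CutChain

lemma lintegral_cutChainWeight_chain_le {E : Type*} [MeasureSpace E]
    [SigmaFinite (volume : Measure E)] {K : E → E → ℝ≥0∞} (hK : Measurable (Function.uncurry K))
    {κ : ℝ≥0∞} (hκ : ∀ a, ∫⁻ x, K a x ≤ κ) {k l : ℕ} (hl : l ≤ k) (x0 xk1 : E) :
    ∫⁻ y : Fin k → E, cutChainWeight K (chain k x0 xk1 y) k l ≤ κ ^ k := by
  induction k generalizing l x0 xk1 with
  | zero =>
    obtain rfl : l = 0 := by omega
    simp [cutChainWeight, volume_pi]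
  | succ k ih =>
    have hKa (a : E) : Measurable (K a) := hK.comp measurable_prodMk_left
    cases l with
    | zero =>
      rw [lintegral_pi_eq_lintegral_insertNth (Fin.last k)
        (measurable_cutChainWeight_chain hK _ _ _ _)]
      simp_rw [Fin.insertNth_last', cutChainWeight_chain_snoc k.zero_le]
      calc ∫⁻ x, ∫⁻ y, cutChainWeight K (chain k x0 x y) k 0 * K xk1 x
          = ∫⁻ x, (∫⁻ y, cutChainWeight K (chain k x0 x y) k 0) * K xk1 x := by
            simp_rw [lintegral_mul_const _ (measurable_cutChainWeight_chain hK _ _ _ _)]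
        _ ≤ ∫⁻ x, κ ^ k * K xk1 x := lintegral_mono fun x => mul_le_mul_left (ih k.zero_le x0 x) _
        _ ≤ κ ^ k * κ := by rw [lintegral_const_mul _ (hKa xk1)]; exact mul_le_mul_right (hκ xk1) _
        _ = κ ^ (k + 1) := (pow_succ κ k).symm
    | succ l =>
      rw [lintegral_pi_eq_lintegral_insertNth 0 (measurable_cutChainWeight_chain hK _ _ _ _)]
      simp_rw [Fin.insertNth_zero', cutChainWeight_chain_cons]
      calc ∫⁻ x, ∫⁻ y, K x0 x * cutChainWeight K (chain k x xk1 y) k l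
          = ∫⁻ x, K x0 x * ∫⁻ y, cutChainWeight K (chain k x xk1 y) k l := by
            simp_rw [lintegral_const_mul _ (measurable_cutChainWeight_chain hK _ _ _ _)]
        _ ≤ ∫⁻ x, K x0 x * κ ^ k :=
            lintegral_mono fun x => mul_le_mul_right (ih (by omega) x xk1) _
        _ ≤ κ * κ ^ k := by rw [lintegral_mul_const _ (hKa x0)]; exact mul_le_mul_left (hκ x0) _
        _ = κ ^ (k + 1) := (pow_succ' κ k).symm

lemma prod_range_cut_eq_prod_Icc {M : Type*} [CommMonoid M] (f : ℕ → M) {k l : ℕ}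
    (hl : l ≤ k) :
    ∏ j ∈ range (k + 1), (if j < l then f (j + 1) else if l < j then f j else 1) =
      ∏ j ∈ Icc 1 k, f j := by
  rw [← mul_prod_erase _ _ (mem_range.mpr (Nat.lt_succ_of_le hl)), if_neg (lt_irrefl l),
    if_neg (lt_irrefl l), one_mul]
  refine prod_nbij' (fun j => if j < l then j + 1 else j) (fun m => if m ≤ l then m - 1 else m)
    ?_ ?_ ?_ ?_ ?_ <;> intro j hj <;> simp only [mem_erase, mem_range, mem_Icc] at hj ⊢ <;>
    split_ifs <;> first | rfl | omega

lemma ofReal_div_prod_dist_mul_dist_le_cutChainWeight {E : Type*} [PseudoMetricSpace E]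
    (V : E → ℝ) (c : ℕ → E) {k l : ℕ} (hl : l ≤ k) :
    ENNReal.ofReal ((∏ j ∈ Icc 1 k, |V (c j)|) / (∏ j ∈ range (k + 1), dist (c j) (c (j + 1))) *
        dist (c l) (c (l + 1))) ≤
      cutChainWeight (fun a x => ENNReal.ofReal (|V x| / dist a x)) c k l := by
  set d : ℕ → ℝ := fun j => dist (c j) (c (j + 1))
  set a : ℕ → ℝ := fun j => if j < l then |V (c (j + 1))| else if l < j then |V (c j)| else 1
  set b : ℕ → ℝ := fun j => if j = l then 1 else d j
  have hweight : cutChainWeight (fun a x => ENNReal.ofReal (|V x| / dist a x)) c k l =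
      ENNReal.ofReal ((∏ j ∈ range (k + 1), a j) / ∏ j ∈ range (k + 1), b j) := by
    rw [← prod_div_distrib, ENNReal.ofReal_prod_of_nonneg fun j _ => by positivity]
    refine prod_congr rfl fun j _ => ?_
    simp only [a, b, d]
    split_ifs <;> first | omega | simp [dist_comm]
  have hd : ∏ j ∈ range (k + 1), d j = d l * ∏ j ∈ range (k + 1), b j := by
    rw [← mul_prod_erase _ _ (mem_range.mpr (Nat.lt_succ_of_le hl)),
      ← mul_prod_erase _ b (mem_range.mpr (Nat.lt_succ_of_le hl))]
    simp only [b, if_pos rfl, one_mul]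
    congr 1
    exact prod_congr rfl fun j hj => (if_neg (ne_of_mem_erase hj)).symm
  rw [hweight, ← prod_range_cut_eq_prod_Icc _ hl]
  refine ENNReal.ofReal_le_ofReal ?_
  change (∏ j ∈ range (k + 1), a j) / (∏ j ∈ range (k + 1), d j) * d l ≤ _
  rcases eq_or_ne (d l) 0 with hdl | hdl
  · rw [hdl, mul_zero]
    exact div_nonneg (prod_nonneg fun j _ => by positivity) (prod_nonneg fun j _ => by positivity)
  · rw [hd, mul_comm (d l), ← div_div, div_mul_cancel₀ _ hdl]

theorem stmt_1_general (V : EuclideanSpace ℝ (Fin 3) → ℝ) (hV : Measurable V) :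
    ∀ k : ℕ, 1 ≤ k → ∀ x0 xk1 : EuclideanSpace ℝ (Fin 3),
      (∫⁻ y : Fin k → EuclideanSpace ℝ (Fin 3),
          ENNReal.ofReal
            (((∏ j ∈ Finset.Icc 1 k, |V (chain k x0 xk1 y j)|) /
                ∏ j ∈ Finset.range (k + 1),
                  dist (chain k x0 xk1 y j) (chain k x0 xk1 y (j + 1))) *
              ∑ l ∈ Finset.range (k + 1),
                dist (chain k x0 xk1 y l) (chain k x0 xk1 y (l + 1))))
        ≤ (k + 1 : ENNReal) *
            (⨆ x : EuclideanSpace ℝ (Fin 3),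
              ∫⁻ y' : EuclideanSpace ℝ (Fin 3), ENNReal.ofReal (|V y'| / dist x y')) ^ k := by
  intro k _ x0 xk1
  set K : EuclideanSpace ℝ (Fin 3) → EuclideanSpace ℝ (Fin 3) → ℝ≥0∞ :=
    fun a x => ENNReal.ofReal (|V x| / dist a x)
  have hK : Measurable (Function.uncurry K) :=
    ((hV.comp measurable_snd).abs.div (measurable_fst.dist measurable_snd)).ennreal_ofReal
  have hκ (a) : ∫⁻ x, K a x ≤ ⨆ x, ∫⁻ y', K x y' := le_iSup (fun x => ∫⁻ y', K x y') a
  calc _ ≤ ∫⁻ y, ∑ l ∈ range (k + 1), cutChainWeight K (chain k x0 xk1 y) k l := by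
        refine lintegral_mono fun y => ?_
        rw [mul_sum, ENNReal.ofReal_sum_of_nonneg fun l _ => by positivity]
        exact sum_le_sum fun l hl =>
          ofReal_div_prod_dist_mul_dist_le_cutChainWeight V _ (Nat.lt_succ_iff.mp (mem_range.mp hl))
    _ = ∑ l ∈ range (k + 1), ∫⁻ y, cutChainWeight K (chain k x0 xk1 y) k l :=
        lintegral_finsetSum _ fun l _ => measurable_cutChainWeight_chain hK k l x0 xk1
    _ ≤ ∑ l ∈ range (k + 1), (⨆ x, ∫⁻ y', K x y') ^ k := sum_le_sum fun l hl =>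
        lintegral_cutChainWeight_chain_le hK hκ (Nat.lt_succ_iff.mp (mem_range.mp hl)) x0 xk1
    _ = _ := by simp [K]

/-- for a measurable `V : ℝ³ → ℝ` with finite global Kato norm
`‖V‖_K = sup_x ∫ |V(y)|/|x-y| dy`, for every `k ≥ 1` and all `x₀, x_{k+1} ∈ ℝ³`,
`∫_{ℝ^{3k}} (∏_{j=1}^k |V(x_j)| / ∏_{j=0}^k |x_j - x_{j+1}|) Σ_{ℓ=0}^k |x_ℓ - x_{ℓ+1}|
  dx₁⋯dx_k ≤ (k+1) ‖V‖_K^k`. -/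
theorem stmt_1 (V : EuclideanSpace ℝ (Fin 3) → ℝ) (hV : Measurable V)
    (hfin : (⨆ x : EuclideanSpace ℝ (Fin 3),
        ∫⁻ y : EuclideanSpace ℝ (Fin 3), ENNReal.ofReal (|V y| / dist x y)) ≠ ⊤) :
    ∀ k : ℕ, 1 ≤ k → ∀ x0 xk1 : EuclideanSpace ℝ (Fin 3),
      (∫⁻ y : Fin k → EuclideanSpace ℝ (Fin 3),
          ENNReal.ofReal
            (((∏ j ∈ Finset.Icc 1 k, |V (chain k x0 xk1 y j)|) /
                ∏ j ∈ Finset.range (k + 1),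
                  dist (chain k x0 xk1 y j) (chain k x0 xk1 y (j + 1))) *
              ∑ l ∈ Finset.range (k + 1),
                dist (chain k x0 xk1 y l) (chain k x0 xk1 y (l + 1))))
        ≤ (k + 1 : ENNReal) *
            (⨆ x : EuclideanSpace ℝ (Fin 3),
              ∫⁻ y' : EuclideanSpace ℝ (Fin 3), ENNReal.ofReal (|V y'| / dist x y')) ^ k :=
  stmt_1_general V hV
end

section
/- Let λ₀ > 0 and let χ : ℝ → ℝ be a smooth function with χ(λ) = 0 for λ ≤ λ₀ and χ(λ) = 1 for λ ≥ 2λ₀. Then there is a constant C = C(χ, λ₀) such that for every integer n ≥ 0, every a ∈ ℝ, and every t > 0, the improper integral lim_{R→∞} ∫_{−R}^{R} e^{i(tλ² + aλ)} χ(λ²) λ^{−n−1} λ₀^{(n+1)/2} dλ exists and has modulus at most C t^{−1/2}. -/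
open MeasureTheory intervalIntegral Filter Set

lemma norm_exp_I_mul (x : ℝ) : ‖Complex.exp (Complex.I * (x : ℂ))‖ = 1 := by
  rw [Complex.norm_exp]
  simp

lemma tail_lemma (t δ : ℝ) (ht : 0 < t) (hδ : 0 < δ) (h h₁ : ℝ → ℂ) (M M₁ : ℝ)
    (hd : ∀ μ : ℝ, HasDerivAt h (h₁ μ) μ) (hc : Continuous h₁)
    (hM : ∀ μ : ℝ, ‖h μ‖ ≤ M) (hi : Integrable h₁) (hM₁ : (∫ μ : ℝ, ‖h₁ μ‖) ≤ M₁) :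
    ∃ L : ℂ, Tendsto (fun R : ℝ => ∫ μ in δ..R, Complex.exp (Complex.I * (t : ℂ) * (μ : ℂ)^2) * h μ)
      atTop (nhds L) ∧ ‖L‖ ≤ (2*M + M₁)/(2*t*δ) := by
  have hM0 : 0 ≤ M := le_trans (norm_nonneg _) (hM 0)
  have hch : Continuous h := by
    have : Differentiable ℝ h := fun μ => (hd μ).differentiableAt
    exact this.continuous
  set u : ℝ → ℂ := fun μ => Complex.exp (Complex.I * (t : ℂ) * (μ : ℂ)^2) with hu_def
  set v : ℝ → ℂ := fun μ => h μ / (2 * Complex.I * t * μ) with hv_def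
  set v' : ℝ → ℂ := fun μ => h₁ μ / (2 * Complex.I * t * μ) - h μ / (2 * Complex.I * t * μ^2)
    with hv'_def
  have htC : (t : ℂ) ≠ 0 := by exact_mod_cast ht.ne'
  have hnorm_u : ∀ μ : ℝ, ‖u μ‖ = 1 := by
    intro μ
    have : Complex.I * (t:ℂ) * (μ:ℂ)^2 = Complex.I * ((t * μ^2 : ℝ) : ℂ) := by push_cast; ring
    rw [hu_def]; simp only [this]; exact norm_exp_I_mul _
  have hcu : Continuous u := by
    apply Complex.continuous_exp.comp
    continuity
  have hu : ∀ μ : ℝ, HasDerivAt u (2 * Complex.I * t * μ * u μ) μ := by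
    intro μ
    have h1 : HasDerivAt (fun μ : ℝ => (μ : ℂ)) 1 μ := by
      simpa using (hasDerivAt_id μ).ofReal_comp
    have h2 : HasDerivAt (fun μ : ℝ => Complex.I * (t:ℂ) * (μ:ℂ)^2)
        (Complex.I * (t:ℂ) * (2 * μ)) μ := by
      have := ((h1.mul h1).const_mul (Complex.I * (t:ℂ)))
      convert this using 2
      · rfl
      · simp only [Pi.mul_apply]; ring
      · ring
    have := h2.cexp
    convert this using 1
    rw [hu_def]; ring
  have hnorm_den : ∀ μ : ℝ, 0 < μ → ‖(2 * Complex.I * (t:ℂ) * (μ:ℂ))‖ = 2 * t * μ := by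
    intro μ hμ
    simp only [norm_mul, Complex.norm_I, Complex.norm_real, Complex.norm_ofNat,
      Real.norm_eq_abs, abs_of_pos ht, abs_of_pos hμ]
    ring
  have hden_ne : ∀ μ : ℝ, μ ≠ 0 → (2 * Complex.I * (t:ℂ) * (μ:ℂ)) ≠ 0 := by
    intro μ hμ
    have : (μ:ℂ) ≠ 0 := by exact_mod_cast hμ
    simp [Complex.I_ne_zero, htC, this]
  have hv : ∀ μ : ℝ, μ ≠ 0 → HasDerivAt v (v' μ) μ := by
    intro μ hμ
    have hden : HasDerivAt (fun μ : ℝ => 2 * Complex.I * (t:ℂ) * (μ:ℂ)) (2 * Complex.I * t) μ := by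
      have h1 : HasDerivAt (fun μ : ℝ => (μ : ℂ)) 1 μ := by
        simpa using (hasDerivAt_id μ).ofReal_comp
      simpa using h1.const_mul (2 * Complex.I * (t:ℂ))
    have := (hd μ).div hden (hden_ne μ hμ)
    convert this using 1
    · rfl
    · rfl
    have hμC : (μ:ℂ) ≠ 0 := by exact_mod_cast hμ
    have hd1 := hden_ne μ hμ
    have hd2 : (2 * Complex.I * (t:ℂ) * (μ:ℂ)^2) ≠ 0 :=
      mul_ne_zero (mul_ne_zero (mul_ne_zero two_ne_zero Complex.I_ne_zero) htC)
        (pow_ne_zero _ hμC)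
    simp only [hv'_def]
    rw [div_sub_div _ _ hd1 hd2, div_eq_div_iff (mul_ne_zero hd1 hd2) (pow_ne_zero 2 hd1)]
    ring
  have huv : ∀ μ : ℝ, μ ≠ 0 →
      HasDerivAt (fun μ => u μ * v μ) (u μ * h μ + u μ * v' μ) μ := by
    intro μ hμ
    have := (hu μ).mul (hv μ hμ)
    convert this using 1
    · rfl
    congr 1
    simp only [hv_def]
    rw [mul_comm (2 * Complex.I * (t:ℂ) * (μ:ℂ)) (u μ), mul_assoc, ← mul_div_assoc,
      mul_comm (2 * Complex.I * (t:ℂ) * (μ:ℂ)) (h μ), mul_div_assoc,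
      div_self (hden_ne μ hμ), mul_one]
  -- continuity of v' away from 0
  have hcoe : Continuous (fun μ : ℝ => (μ : ℂ)) := Complex.continuous_ofReal
  have hcv' : ContinuousOn v' {μ : ℝ | μ ≠ 0} := by
    apply ContinuousOn.sub
    · apply ContinuousOn.div hc.continuousOn
      · fun_prop
      · intro μ hμ; exact hden_ne μ hμ
    · apply ContinuousOn.div hch.continuousOn
      · fun_prop
      · intro μ hμ
        have : (μ:ℂ) ≠ 0 := by exact_mod_cast hμ
        simp [Complex.I_ne_zero, htC, this, pow_eq_zero_iff]
  have hnorm_den2 : ∀ μ : ℝ, 0 < μ → ‖(2 * Complex.I * (t:ℂ) * (μ:ℂ)^2)‖ = 2 * t * μ^2 := by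
    intro μ hμ
    simp only [norm_mul, Complex.norm_I, Complex.norm_real, Complex.norm_ofNat, norm_pow,
      Real.norm_eq_abs, abs_of_pos ht, abs_of_pos hμ, sq_abs]
    ring
  set k : ℝ → ℂ := fun μ => Complex.exp (Complex.I * (t:ℂ) * (μ:ℂ)^2) * h μ with hk_def
  have hck : Continuous k := hcu.mul hch
  have hIoisub : Ioi δ ⊆ {μ : ℝ | μ ≠ 0} := fun x hx => (lt_trans hδ hx).ne'
  have hmeas : AEStronglyMeasurable (fun μ => u μ * v' μ) (volume.restrict (Ioi δ)) :=
    ContinuousOn.aestronglyMeasurable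
      (hcu.continuousOn.mul (hcv'.mono hIoisub)) measurableSet_Ioi
  set q : ℝ → ℝ := fun μ => ‖h₁ μ‖ * (2*t*δ)⁻¹ + (M * (2*t)⁻¹) * μ ^ (-2:ℝ) with hq_def
  have hqint : IntegrableOn q (Ioi δ) := by
    apply Integrable.add
    · exact (hi.norm.mul_const _).integrableOn
    · exact (integrableOn_Ioi_rpow_of_lt (by norm_num) hδ).const_mul _
  have hbound : ∀ μ : ℝ, μ ∈ Ioi δ → ‖u μ * v' μ‖ ≤ q μ := by
    intro μ hμ
    have hμpos : 0 < μ := lt_trans hδ hμ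
    have hμδ : δ ≤ μ := le_of_lt hμ
    rw [norm_mul, hnorm_u, one_mul, hq_def]
    have hrpow : μ ^ (-2:ℝ) = (μ^2)⁻¹ := by
      rw [Real.rpow_neg hμpos.le, ← Real.rpow_natCast μ 2]
      norm_num
    calc ‖v' μ‖ ≤ ‖h₁ μ / (2 * Complex.I * (t:ℂ) * (μ:ℂ))‖ +
          ‖h μ / (2 * Complex.I * (t:ℂ) * (μ:ℂ)^2)‖ := norm_sub_le _ _
      _ = ‖h₁ μ‖ / (2*t*μ) + ‖h μ‖ / (2*t*μ^2) := by
          rw [norm_div, norm_div, hnorm_den μ hμpos, hnorm_den2 μ hμpos]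
      _ ≤ ‖h₁ μ‖ / (2*t*δ) + M / (2*t*μ^2) := by
          have hle : 2*t*δ ≤ 2*t*μ := by nlinarith
          gcongr <;> first | exact norm_nonneg _ | exact hM μ | nlinarith
      _ = ‖h₁ μ‖ * (2*t*δ)⁻¹ + M * (2*t)⁻¹ * μ ^ (-2:ℝ) := by
          rw [hrpow]; field_simp
  have hIuv' : IntegrableOn (fun μ => u μ * v' μ) (Ioi δ) := by
    apply Integrable.mono' hqint hmeas
    filter_upwards [ae_restrict_mem measurableSet_Ioi] with μ hμ
    exact hbound μ hμ
  have hIoiTendsto : Tendsto (fun R : ℝ => ∫ μ in δ..R, u μ * v' μ) atTop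
      (nhds (∫ μ in Ioi δ, u μ * v' μ)) :=
    intervalIntegral_tendsto_integral_Ioi δ hIuv' tendsto_id
  have hboundary : Tendsto (fun R : ℝ => u R * v R) atTop (nhds 0) := by
    refine squeeze_zero_norm' (a := fun R : ℝ => (M * (2*t)⁻¹) * R⁻¹) ?_ ?_
    · filter_upwards [eventually_gt_atTop 0] with R hR
      rw [norm_mul, hnorm_u, one_mul, hv_def]
      calc ‖h R / (2 * Complex.I * (t:ℂ) * (R:ℂ))‖ = ‖h R‖ / (2*t*R) := by
            rw [norm_div, hnorm_den R hR]
        _ ≤ M / (2*t*R) := by gcongr; exact hM R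
        _ = M * (2*t)⁻¹ * R⁻¹ := by field_simp
    · simpa using tendsto_inv_atTop_zero.const_mul (M * (2*t)⁻¹)
  have hIdent : ∀ᶠ R in atTop, (∫ μ in δ..R, k μ) =
      (u R * v R - u δ * v δ) - ∫ μ in δ..R, u μ * v' μ := by
    filter_upwards [eventually_ge_atTop δ] with R hR
    have hsub : ∀ x ∈ Set.uIcc δ R, x ≠ 0 := by
      intro x hx
      rw [Set.uIcc_of_le hR] at hx
      exact (lt_of_lt_of_le hδ hx.1).ne'
    have hderiv : ∀ x ∈ Set.uIcc δ R, HasDerivAt (fun μ => u μ * v μ) (k x + u x * v' x) x :=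
      fun x hx => huv x (hsub x hx)
    have hcont2 : ContinuousOn (fun x => u x * v' x) (Set.uIcc δ R) :=
      hcu.continuousOn.mul (hcv'.mono (fun x hx => hsub x hx))
    have hii : IntervalIntegrable (fun x => k x + u x * v' x) volume δ R :=
      ((hck.continuousOn).add hcont2).intervalIntegrable
    have h1 := intervalIntegral.integral_eq_sub_of_hasDerivAt hderiv hii
    have hii2 : IntervalIntegrable (fun x => u x * v' x) volume δ R :=
      hcont2.intervalIntegrable
    have hii1 : IntervalIntegrable k volume δ R := hck.intervalIntegrable δ R
    rw [intervalIntegral.integral_add hii1 hii2] at h1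
    linear_combination h1
  refine ⟨(0 - u δ * v δ) - ∫ μ in Ioi δ, u μ * v' μ, ?_, ?_⟩
  · refine Tendsto.congr' ?_ ((hboundary.sub tendsto_const_nhds).sub hIoiTendsto)
    filter_upwards [hIdent] with R hR
    exact hR.symm
  · have hvδ : ‖u δ * v δ‖ ≤ M / (2*t*δ) := by
      rw [norm_mul, hnorm_u, one_mul, hv_def]
      calc ‖h δ / (2 * Complex.I * (t:ℂ) * (δ:ℂ))‖ = ‖h δ‖ / (2*t*δ) := by
            rw [norm_div, hnorm_den δ hδ]
        _ ≤ M / (2*t*δ) := by gcongr; exact hM δ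
    have hIq : ‖∫ μ in Ioi δ, u μ * v' μ‖ ≤ ∫ μ in Ioi δ, q μ := by
      apply MeasureTheory.norm_integral_le_of_norm_le hqint
      filter_upwards [ae_restrict_mem measurableSet_Ioi] with μ hμ
      exact hbound μ hμ
    have hqval : (∫ μ in Ioi δ, q μ) ≤ M₁ * (2*t*δ)⁻¹ + (M * (2*t)⁻¹) * δ⁻¹ := by
      rw [hq_def]
      rw [integral_add ((hi.norm.mul_const _).integrableOn)
        ((integrableOn_Ioi_rpow_of_lt (by norm_num) hδ).const_mul _)]
      have e1 : (∫ μ in Ioi δ, ‖h₁ μ‖ * (2*t*δ)⁻¹) ≤ M₁ * (2*t*δ)⁻¹ := by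
        rw [MeasureTheory.integral_mul_const]
        apply mul_le_mul_of_nonneg_right _ (by positivity)
        calc (∫ μ in Ioi δ, ‖h₁ μ‖) ≤ ∫ μ : ℝ, ‖h₁ μ‖ := by
              apply setIntegral_le_integral hi.norm
              filter_upwards with μ using norm_nonneg _
          _ ≤ M₁ := hM₁
      have e2 : (∫ μ in Ioi δ, (M * (2*t)⁻¹) * μ ^ (-2:ℝ)) = (M * (2*t)⁻¹) * δ⁻¹ := by
        rw [MeasureTheory.integral_const_mul, integral_Ioi_rpow_of_lt (by norm_num) hδ]
        congr 1
        rw [show (-2:ℝ)+1 = -1 by norm_num, Real.rpow_neg_one]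
        ring
      linarith [e1, e2]
    calc ‖(0 : ℂ) - u δ * v δ - ∫ μ in Ioi δ, u μ * v' μ‖
        ≤ ‖(0:ℂ) - u δ * v δ‖ + ‖∫ μ in Ioi δ, u μ * v' μ‖ := norm_sub_le _ _
      _ ≤ M / (2*t*δ) + (M₁ * (2*t*δ)⁻¹ + (M * (2*t)⁻¹) * δ⁻¹) := by
          rw [zero_sub, norm_neg]
          have := le_trans hIq hqval
          linarith
      _ = (2*M + M₁) / (2*t*δ) := by field_simp; ring

lemma neg_tail (f : ℝ → ℝ) (hf : ∀ x : ℝ, f (-x) = f x) (s : ℝ) (h1 : IntegrableOn f (Ioi s)) :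
    IntegrableOn f (Iio (-s)) ∧ (∫ x in Iio (-s), f x) = ∫ x in Ioi s, f x := by
  have key : Set.indicator (Iio (-s)) f = fun x => Set.indicator (Ioi s) f (-x) := by
    funext x
    by_cases hx : x < -s
    · rw [Set.indicator_of_mem (by exact hx), Set.indicator_of_mem (by simp; linarith), hf]
    · rw [Set.indicator_of_notMem (by exact hx), Set.indicator_of_notMem (by simp; linarith)]
  constructor
  · rw [← integrable_indicator_iff measurableSet_Iio, key]
    exact ((integrable_indicator_iff measurableSet_Ioi).2 h1).comp_neg
  · rw [← MeasureTheory.integral_indicator measurableSet_Iio, key,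
      integral_neg_eq_self _ volume, MeasureTheory.integral_indicator measurableSet_Ioi]

lemma cont_aux (s : ℝ) (hs : 0 < s) (f : ℝ → ℝ) (hf : ∀ y : ℝ, |y| < s → f y = 0)
    (hf' : ∀ x : ℝ, x ≠ 0 → ContinuousAt f x) : Continuous f := by
  rw [continuous_iff_continuousAt]
  intro x
  rcases eq_or_ne x 0 with rfl | hx
  · have hev : f =ᶠ[nhds (0:ℝ)] fun _ => 0 := by
      filter_upwards [Metric.ball_mem_nhds (0:ℝ) hs] with y hy
      exact hf y (by simpa [Real.dist_eq] using hy)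
    exact (continuousAt_congr hev).2 continuousAt_const
  · exact hf' x hx

set_option maxHeartbeats 2000000 in
/-- uniform-in-`n` and `a` quadratic-phase bound for the high-energy cutoff:
for a smooth `χ` vanishing on `(-∞,λ₀]` and equal to `1` on `[2λ₀,∞)` (`λ₀ > 0`), the
improper integral `∫_ℝ e^{i(tλ²+aλ)} χ(λ²) λ^{-n-1} λ₀^{(n+1)/2} dλ` exists and is bounded
in modulus by `C t^{-1/2}`, with `C = C(χ, λ₀)` independent of `n`, `a`, `t > 0`. -/
theorem stmt_8 (lam0 : ℝ) (hlam0 : 0 < lam0) (χ : ℝ → ℝ) (hχ : ContDiff ℝ (⊤ : ℕ∞) χ)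
    (hχ0 : ∀ x : ℝ, x ≤ lam0 → χ x = 0) (hχ1 : ∀ x : ℝ, 2 * lam0 ≤ x → χ x = 1) :
    ∃ C : ℝ, ∀ (n : ℕ) (a t : ℝ), 0 < t →
      ∃ I : ℂ,
        Tendsto
          (fun R : ℝ => ∫ lam in (-R)..R,
            Complex.exp (Complex.I * ((t : ℂ) * (lam : ℂ) ^ 2 + (a : ℂ) * (lam : ℂ))) *
              ((χ (lam ^ 2) * lam ^ (-(n : ℤ) - 1) * lam0 ^ (((n : ℝ) + 1) / 2) : ℝ) : ℂ))
          atTop (nhds I) ∧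
        ‖I‖ ≤ C * t ^ (-(1 : ℝ) / 2) := by
  have hχc : Continuous χ := hχ.continuous
  have hχ'c : Continuous (deriv χ) := hχ.continuous_deriv (by simp)
  obtain ⟨B, hB⟩ := (isCompact_Icc (a := lam0) (b := 2*lam0)).exists_bound_of_continuousOn
    hχc.continuousOn
  obtain ⟨B', hB'⟩ := (isCompact_Icc (a := lam0) (b := 2*lam0)).exists_bound_of_continuousOn
    hχ'c.continuousOn
  set M : ℝ := max B 1 with hM_def
  set M' : ℝ := max B' 0 with hM'_def
  have hM0 : 0 ≤ M := le_trans zero_le_one (le_max_right _ _)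
  have hM'0 : 0 ≤ M' := le_max_right _ _
  have hd0 : ∀ x : ℝ, x < lam0 → deriv χ x = 0 := by
    intro x hx
    have hev : χ =ᶠ[nhds x] (fun _ => (0:ℝ)) :=
      Filter.eventually_of_mem (Iio_mem_nhds hx) (fun y hy => hχ0 y (le_of_lt hy))
    rw [hev.deriv_eq]
    simp
  have hd1 : ∀ x : ℝ, 2*lam0 < x → deriv χ x = 0 := by
    intro x hx
    have hev : χ =ᶠ[nhds x] (fun _ => (1:ℝ)) :=
      Filter.eventually_of_mem (Ioi_mem_nhds hx) (fun y hy => hχ1 y (le_of_lt hy))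
    rw [hev.deriv_eq]
    simp
  have hχb : ∀ x : ℝ, |χ x| ≤ M := by
    intro x
    rcases le_or_gt x lam0 with hx | hx
    · rw [hχ0 x hx]; simpa using hM0
    rcases le_or_gt (2*lam0) x with hx2 | hx2
    · rw [hχ1 x hx2, abs_one]; exact le_max_right B 1
    · exact le_trans (by simpa [Real.norm_eq_abs] using hB x ⟨hx.le, hx2.le⟩) (le_max_left _ _)
  have hχ'b : ∀ x : ℝ, |deriv χ x| ≤ M' := by
    intro x
    rcases lt_or_ge x lam0 with hx | hx
    · rw [hd0 x hx]; simpa using hM'0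
    rcases lt_or_ge (2*lam0) x with hx2 | hx2
    · rw [hd1 x hx2]; simpa using hM'0
    · exact le_trans (by simpa [Real.norm_eq_abs] using hB' x ⟨hx, hx2⟩) (le_max_left _ _)
  set s : ℝ := Real.sqrt lam0 with hs_def
  have hs : 0 < s := Real.sqrt_pos.2 hlam0
  set r : ℝ := Real.sqrt (2*lam0) with hr_def
  have hr : 0 < r := Real.sqrt_pos.2 (by linarith)
  set M₁ : ℝ := 8*lam0*M' + 2*M with hM₁_def
  have hM₁0 : 0 ≤ M₁ := by positivity
  refine ⟨4*M + M₁, ?_⟩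
  intro n a t ht
  -- the amplitude
  set m : ℤ := -(n:ℤ) - 1 with hm_def
  set K : ℝ := lam0 ^ (((n:ℝ)+1)/2) with hK_def
  have hKpos : 0 < K := Real.rpow_pos_of_pos hlam0 _
  have hKs : K = s ^ (n+1) := by
    rw [hK_def, hs_def, Real.sqrt_eq_rpow, ← Real.rpow_natCast (lam0 ^ (1/(2:ℝ))) (n+1),
      ← Real.rpow_mul hlam0.le]
    congr 1
    push_cast
    ring
  set g : ℝ → ℝ := fun lam => χ (lam^2) * lam ^ m * K with hg_def
  set D1 : ℝ → ℝ := fun lam => deriv χ (lam^2) * (2*lam) * lam ^ m * K with hD1_def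
  set D2 : ℝ → ℝ := fun lam => χ (lam^2) * ((m:ℝ) * lam ^ (m-1)) * K with hD2_def
  set D : ℝ → ℝ := fun lam => D1 lam + D2 lam with hD_def
  have hpow : ∀ lam : ℝ, s ≤ |lam| → |lam ^ m| * K ≤ 1 := by
    intro lam hlam
    have hlampos : (0:ℝ) < |lam| := lt_of_lt_of_le hs hlam
    have h2 : m = -((n+1 : ℕ) : ℤ) := by rw [hm_def]; push_cast; ring
    rw [h2, zpow_neg, zpow_natCast, abs_inv, abs_pow, hKs]
    have hle : s ^ (n+1) ≤ |lam| ^ (n+1) := pow_le_pow_left₀ hs.le hlam _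
    have hpos : (0:ℝ) < |lam| ^ (n+1) := pow_pos hlampos _
    calc (|lam| ^ (n+1))⁻¹ * s ^ (n+1) ≤ (|lam| ^ (n+1))⁻¹ * |lam| ^ (n+1) :=
          mul_le_mul_of_nonneg_left hle (inv_nonneg.2 hpos.le)
      _ = 1 := inv_mul_cancel₀ hpos.ne'
  have hsq : ∀ lam : ℝ, |lam| ≤ s → lam^2 ≤ lam0 := by
    intro lam hlam
    calc lam^2 = |lam|^2 := (sq_abs lam).symm
      _ ≤ s^2 := by nlinarith [abs_nonneg lam]
      _ = lam0 := Real.sq_sqrt hlam0.le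
  have hsqlt : ∀ lam : ℝ, |lam| < s → lam^2 < lam0 := by
    intro lam hlam
    calc lam^2 = |lam|^2 := (sq_abs lam).symm
      _ < s^2 := by nlinarith [abs_nonneg lam]
      _ = lam0 := Real.sq_sqrt hlam0.le
  have hsqgt : ∀ lam : ℝ, r < |lam| → 2*lam0 < lam^2 := by
    intro lam hlam
    calc 2*lam0 = r^2 := (Real.sq_sqrt (by linarith)).symm
      _ < |lam|^2 := by nlinarith [hr]
      _ = lam^2 := sq_abs lam
  -- derivative of g
  have hgD : ∀ lam : ℝ, HasDerivAt g (D lam) lam := by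
    intro lam
    rcases eq_or_ne lam 0 with rfl | hlam
    · have hev : g =ᶠ[nhds (0:ℝ)] (fun _ => (0:ℝ)) := by
        filter_upwards [Metric.ball_mem_nhds (0:ℝ) hs] with y hy
        have hys : |y| < s := by simpa [Real.dist_eq] using hy
        rw [hg_def]
        simp only []
        rw [hχ0 _ (hsqlt y hys).le]
        ring
      have hD0 : D 0 = 0 := by
        rw [hD_def, hD1_def, hD2_def]
        simp only []
        rw [hχ0 _ (by simpa using hlam0.le)]
        have hz1 : (0:ℝ) ^ m = 0 := zero_zpow m (by rw [hm_def]; omega)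
        rw [hz1]
        ring
      rw [hD0]
      exact (hasDerivAt_const 0 (0:ℝ)).congr_of_eventuallyEq hev
    · have hχd : HasDerivAt χ (deriv χ (lam^2)) (lam^2) :=
        ((hχ.differentiable (by simp)) (lam^2)).hasDerivAt
      have hsq' : HasDerivAt (fun y : ℝ => y^2) (2*lam) lam := by
        simpa using hasDerivAt_pow 2 lam
      have hcomp0 : HasDerivAt (χ ∘ fun y : ℝ => y^2) (deriv χ (lam^2) * (2*lam)) lam :=
        HasDerivAt.comp (h₂ := χ) (h := fun y : ℝ => y^2) lam hχd hsq'
      have hcomp : HasDerivAt (fun y : ℝ => χ (y^2)) (deriv χ (lam^2) * (2*lam)) lam := by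
        simpa [Function.comp_def] using hcomp0
      have hz : HasDerivAt (fun y : ℝ => y ^ m) ((m:ℝ) * lam ^ (m-1)) lam :=
        hasDerivAt_zpow m lam (Or.inl hlam)
      have := (hcomp.mul hz).mul_const K
      convert this using 1
      · rfl
      · rfl
      · rfl
      rw [hD_def, hD1_def, hD2_def]
      simp only []
      ring
  -- bound on g
  have hgb : ∀ lam : ℝ, |g lam| ≤ M := by
    intro lam
    rcases lt_or_ge |lam| s with hl | hl
    · rw [hg_def]
      simp only []
      rw [hχ0 _ (hsqlt lam hl).le]
      simpa using hM0
    · rw [hg_def]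
      simp only []
      rw [abs_mul, abs_mul, abs_of_pos hKpos, mul_assoc]
      calc |χ (lam^2)| * (|lam ^ m| * K) ≤ M * 1 :=
            mul_le_mul (hχb _) (hpow lam hl) (by positivity) hM0
        _ = M := mul_one M
  -- continuity
  have hD1c : Continuous D1 := by
    apply cont_aux s hs
    · intro y hy
      rw [hD1_def]
      simp only []
      rw [hd0 _ (hsqlt y hy)]
      ring
    · intro x hx
      rw [hD1_def]
      exact ((((hχ'c.comp (continuous_pow 2)).continuousAt.mul
        (continuous_const.mul continuous_id).continuousAt).mul
        (continuousAt_zpow₀ x m (Or.inl hx))).mul continuousAt_const)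
  have hD2c : Continuous D2 := by
    apply cont_aux s hs
    · intro y hy
      rw [hD2_def]
      simp only []
      rw [hχ0 _ (hsqlt y hy).le]
      ring
    · intro x hx
      rw [hD2_def]
      exact (((hχc.comp (continuous_pow 2)).continuousAt.mul
        (continuousAt_const.mul (continuousAt_zpow₀ x (m-1) (Or.inl hx)))).mul continuousAt_const)
  have hDc : Continuous D := hD1c.add hD2c
  -- D1 : integrable with integral bound
  have hD1z : ∀ lam : ℝ, r < |lam| → D1 lam = 0 := by
    intro lam hlam
    rw [hD1_def]
    simp only []
    rw [hd1 _ (hsqgt lam hlam)]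
    ring
  have hD1b : ∀ lam : ℝ, |D1 lam| ≤ Set.indicator (Icc (-r) r) (fun _ => 2*r*M') lam := by
    intro lam
    rcases le_or_gt |lam| r with hl | hl
    · have hmem : lam ∈ Icc (-r) r := by
        rcases abs_le.1 hl with ⟨h1, h2⟩
        exact ⟨h1, h2⟩
      rw [Set.indicator_of_mem hmem]
      rcases lt_or_ge |lam| s with h2 | h2
      · rw [hD1_def]
        simp only []
        rw [hd0 _ (hsqlt lam h2)]
        simp only [zero_mul, abs_zero]
        positivity
      · rw [hD1_def]
        simp only []
        rw [abs_mul, abs_mul, abs_mul, abs_of_pos hKpos,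
          mul_assoc (|deriv χ (lam^2)| * |2*lam|)]
        have hab : |2*lam| ≤ 2*r := by
          rw [abs_mul, abs_two]
          nlinarith
        calc |deriv χ (lam^2)| * |2*lam| * (|lam ^ m| * K)
            ≤ M' * (2*r) * 1 :=
              mul_le_mul (mul_le_mul (hχ'b _) hab (abs_nonneg _) hM'0) (hpow lam h2)
                (by positivity) (by positivity)
          _ = 2*r*M' := by ring
    · rw [Set.indicator_of_notMem (by
        intro hmem
        rcases hmem with ⟨h1, h2⟩
        have : |lam| ≤ r := abs_le.2 ⟨h1, h2⟩
        linarith), hD1z lam hl]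
      simp
  have hD1int : Integrable D1 := by
    apply hD1c.integrable_of_hasCompactSupport
    apply HasCompactSupport.intro (isCompact_Icc (a := -r) (b := r))
    intro lam hlam
    apply hD1z lam
    by_contra hcon
    push_neg at hcon
    rcases abs_le.1 hcon with ⟨h1, h2⟩
    exact hlam ⟨h1, h2⟩
  have hindint : Integrable (Set.indicator (Icc (-r) r) (fun _ : ℝ => 2*r*M')) := by
    rw [integrable_indicator_iff measurableSet_Icc]
    exact integrableOn_const (by rw [Real.volume_Icc]; exact ENNReal.ofReal_ne_top)
  have hID1 : (∫ lam : ℝ, |D1 lam|) ≤ 8 * lam0 * M' := by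
    have h1 : (∫ lam : ℝ, |D1 lam|) ≤ ∫ lam : ℝ, Set.indicator (Icc (-r) r) (fun _ => 2*r*M') lam :=
      integral_mono hD1int.abs hindint hD1b
    have h2 : (∫ lam : ℝ, Set.indicator (Icc (-r) r) (fun _ => 2*r*M') lam)
        = (volume (Icc (-r) r)).toReal • (2*r*M') := integral_indicator_const _ measurableSet_Icc
    have hrr : r^2 = 2*lam0 := Real.sq_sqrt (by linarith)
    rw [h2, Real.volume_Icc, ENNReal.toReal_ofReal (by linarith), smul_eq_mul] at h1
    nlinarith [h1, hrr, hM'0]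
  -- D2 : integrable with integral bound
  have hmabs : |(m:ℝ)| = (n:ℝ) + 1 := by
    have : ((m:ℤ):ℝ) = -((n:ℝ)+1) := by rw [hm_def]; push_cast; ring
    rw [this, abs_neg, abs_of_nonneg (by positivity)]
  set cc : ℝ := M * ((n:ℝ)+1) * K with hcc_def
  have habs2 : ∀ lam : ℝ, |lam ^ (m-1)| = (|lam| ^ (n+2))⁻¹ := by
    intro lam
    have h2 : m - 1 = -((n+2 : ℕ) : ℤ) := by rw [hm_def]; push_cast; ring
    rw [h2, zpow_neg, zpow_natCast, abs_inv, abs_pow]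
  have hD2z : ∀ lam : ℝ, |lam| ≤ s → D2 lam = 0 := by
    intro lam hlam
    rw [hD2_def]
    simp only []
    rw [hχ0 _ (hsq lam hlam)]
    ring
  set f0 : ℝ → ℝ := fun x => cc * (|x| ^ (n+2))⁻¹ with hf0_def
  have hf0even : ∀ x : ℝ, f0 (-x) = f0 x := by
    intro x
    rw [hf0_def]
    simp [abs_neg]
  have hD2b : ∀ lam : ℝ, |D2 lam| ≤ Set.indicator (Iio (-s) ∪ Ioi s) f0 lam := by
    intro lam
    rcases le_or_gt |lam| s with hl | hl
    · rw [hD2z lam hl, Set.indicator_of_notMem]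
      · simp
      · intro hmem
        rcases abs_le.1 hl with ⟨h1, h2⟩
        rcases hmem with hmem | hmem
        · simp only [mem_Iio] at hmem; linarith
        · simp only [mem_Ioi] at hmem; linarith
    · have hmem : lam ∈ Iio (-s) ∪ Ioi s := by
        rcases lt_abs.1 hl with h1 | h1
        · right; exact h1
        · left; simp only [mem_Iio]; linarith
      rw [Set.indicator_of_mem hmem, hD2_def]
      simp only []
      rw [abs_mul, abs_mul, abs_mul, abs_of_pos hKpos, hmabs, habs2, hf0_def]
      calc |χ (lam^2)| * (((n:ℝ)+1) * (|lam| ^ (n+2))⁻¹) * K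
          ≤ M * ((((n:ℝ)+1) * (|lam| ^ (n+2))⁻¹) * K) := by
            rw [mul_assoc]
            refine mul_le_mul_of_nonneg_right (hχb _) ?_
            have h0 : (0:ℝ) < |lam| := lt_trans hs hl
            positivity
        _ = cc * (|lam| ^ (n+2))⁻¹ := by rw [hcc_def]; ring
  have hrp : ∀ x : ℝ, 0 < x → x ^ (-(n:ℝ)-2) = ((x ^ (n+2) : ℝ))⁻¹ := by
    intro x hx0
    rw [← Real.rpow_natCast x (n+2), ← Real.rpow_neg hx0.le]
    congr 1
    push_cast
    ring
  have hIof0 : IntegrableOn f0 (Ioi s) := by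
    have hbase : IntegrableOn (fun x : ℝ => x ^ (-(n:ℝ)-2)) (Ioi s) :=
      integrableOn_Ioi_rpow_of_lt (by
        have : (0:ℝ) ≤ (n:ℝ) := n.cast_nonneg
        linarith) hs
    apply MeasureTheory.IntegrableOn.congr_fun (hbase.const_mul cc) _ measurableSet_Ioi
    intro x hx
    have hx0 : 0 < x := lt_trans hs hx
    rw [hf0_def]
    simp only []
    rw [abs_of_pos hx0, hrp x hx0]
  obtain ⟨hIif0, hIif0val⟩ := neg_tail f0 hf0even s hIof0
  have hindmeas : MeasurableSet (Iio (-s) ∪ Ioi s) := measurableSet_Iio.union measurableSet_Ioi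
  have hdisj : Disjoint (Iio (-s)) (Ioi s) := by
    apply Set.disjoint_left.2
    intro x hx1 hx2
    simp only [mem_Iio] at hx1
    simp only [mem_Ioi] at hx2
    linarith
  have hf0union : IntegrableOn f0 (Iio (-s) ∪ Ioi s) := hIif0.union hIof0
  have hwint : Integrable (Set.indicator (Iio (-s) ∪ Ioi s) f0) :=
    (integrable_indicator_iff hindmeas).2 hf0union
  have hD2int : Integrable D2 := by
    apply hwint.mono' hD2c.aestronglyMeasurable
    filter_upwards with lam
    rw [Real.norm_eq_abs]
    exact hD2b lam
  have hf0val : (∫ x in Ioi s, f0 x) = M * (K * s ^ (-(n:ℝ)-1)) := by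
    have hcong : ∀ x ∈ Ioi s, f0 x = cc * x ^ (-(n:ℝ)-2) := by
      intro x hx
      have hx0 : 0 < x := lt_trans hs hx
      rw [hf0_def]
      simp only []
      rw [abs_of_pos hx0, hrp x hx0]
    rw [setIntegral_congr_fun measurableSet_Ioi hcong, MeasureTheory.integral_const_mul,
      integral_Ioi_rpow_of_lt (by
        have : (0:ℝ) ≤ (n:ℝ) := n.cast_nonneg
        linarith) hs]
    rw [hcc_def, show (-(n:ℝ)-2) + 1 = -((n:ℝ)+1) by ring]
    have hn1 : (0:ℝ) < (n:ℝ) + 1 := by positivity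
    rw [show -(n:ℝ)-1 = -((n:ℝ)+1) by ring, neg_div_neg_eq]
    field_simp
  have hKsinv : K * s ^ (-(n:ℝ)-1) = 1 := by
    rw [hKs, ← Real.rpow_natCast s (n+1), ← Real.rpow_add hs,
      show ((n+1 : ℕ):ℝ) + (-(n:ℝ)-1) = 0 by push_cast; ring, Real.rpow_zero]
  have hID2 : (∫ lam : ℝ, |D2 lam|) ≤ 2*M := by
    have hmono : (∫ lam : ℝ, |D2 lam|) ≤ ∫ lam : ℝ, Set.indicator (Iio (-s) ∪ Ioi s) f0 lam :=
      integral_mono hD2int.abs hwint hD2b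
    have hsplit : (∫ lam : ℝ, Set.indicator (Iio (-s) ∪ Ioi s) f0 lam)
        = (∫ x in Iio (-s), f0 x) + ∫ x in Ioi s, f0 x := by
      rw [MeasureTheory.integral_indicator hindmeas,
        setIntegral_union hdisj measurableSet_Ioi hIif0 hIof0]
    rw [hsplit, hIif0val, hf0val, hKsinv, mul_one] at hmono
    linarith
  have hDint : Integrable D := hD1int.add hD2int
  have hIDbound : (∫ lam : ℝ, |D lam|) ≤ M₁ := by
    have h1 : ∀ lam : ℝ, |D lam| ≤ |D1 lam| + |D2 lam| := by
      intro lam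
      rw [hD_def]
      exact abs_add_le _ _
    calc (∫ lam : ℝ, |D lam|) ≤ ∫ lam : ℝ, (|D1 lam| + |D2 lam|) :=
          integral_mono hDint.abs (hD1int.abs.add hD2int.abs) h1
      _ = (∫ lam : ℝ, |D1 lam|) + ∫ lam : ℝ, |D2 lam| :=
          integral_add hD1int.abs hD2int.abs
      _ ≤ 8*lam0*M' + 2*M := add_le_add hID1 hID2
      _ = M₁ := hM₁_def.symm
  -- assembly
  have htC : (t:ℂ) ≠ 0 := by exact_mod_cast ht.ne'
  set c0 : ℝ := a / (2*t) with hc0_def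
  set θ : ℝ := -(a^2) / (4*t) with hθ_def
  have hst : 0 < Real.sqrt t := Real.sqrt_pos.2 ht
  set δ : ℝ := (Real.sqrt t)⁻¹ with hδ_def
  have hδpos : 0 < δ := by positivity
  set h : ℝ → ℂ := fun μ => ((g (μ - c0) : ℝ) : ℂ) with hh_def
  set h₁ : ℝ → ℂ := fun μ => ((D (μ - c0) : ℝ) : ℂ) with hh₁_def
  have hd : ∀ μ : ℝ, HasDerivAt h (h₁ μ) μ := by
    intro μ
    have h0 : HasDerivAt (fun μ : ℝ => μ - c0) 1 μ := (hasDerivAt_id μ).sub_const c0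
    have h1 : HasDerivAt (fun μ : ℝ => g (μ - c0)) (D (μ - c0)) μ := by
      have := HasDerivAt.comp (h₂ := g) (h := fun μ : ℝ => μ - c0) μ (hgD (μ - c0)) h0
      simpa [Function.comp_def] using this
    exact h1.ofReal_comp
  have hgc : Continuous g := by
    have : Differentiable ℝ g := fun lam => (hgD lam).differentiableAt
    exact this.continuous
  have hhc : Continuous h :=
    Complex.continuous_ofReal.comp (hgc.comp (continuous_id.sub continuous_const))
  have hc : Continuous h₁ :=
    Complex.continuous_ofReal.comp (hDc.comp (continuous_id.sub continuous_const))
  have hMnorm : ∀ μ : ℝ, ‖h μ‖ ≤ M := by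
    intro μ
    rw [hh_def]
    simp only [Complex.norm_real, Real.norm_eq_abs]
    exact hgb _
  have hi : Integrable h₁ := (hDint.comp_sub_right c0).ofReal
  have hM₁i : (∫ μ : ℝ, ‖h₁ μ‖) ≤ M₁ := by
    have e : (∫ μ : ℝ, ‖h₁ μ‖) = ∫ μ : ℝ, |D (μ - c0)| := by
      congr 1
      funext μ
      rw [hh₁_def]
      simp [Complex.norm_real, Real.norm_eq_abs]
    rw [e, integral_sub_right_eq_self (fun x => |D x|) c0]
    exact hIDbound
  obtain ⟨Lp, hLp, hLpb⟩ := tail_lemma t δ ht hδpos h h₁ M M₁ hd hc hMnorm hi hM₁i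
  have hdneg : ∀ μ : ℝ, HasDerivAt (fun ν : ℝ => h (-ν)) (-(h₁ (-μ))) μ := by
    intro μ
    have h0 : HasDerivAt (fun ν : ℝ => -ν) (-1) μ := by exact hasDerivAt_neg μ
    have := (hd (-μ)).scomp μ h0
    simpa [Function.comp_def] using this
  have hcneg : Continuous (fun μ : ℝ => -(h₁ (-μ))) := (hc.comp continuous_neg).neg
  have hMneg : ∀ μ : ℝ, ‖h (-μ)‖ ≤ M := fun μ => hMnorm (-μ)
  have hineg : Integrable (fun μ : ℝ => -(h₁ (-μ))) := (hi.comp_neg).neg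
  have hM₁neg : (∫ μ : ℝ, ‖-(h₁ (-μ))‖) ≤ M₁ := by
    have e : (fun μ : ℝ => ‖-(h₁ (-μ))‖) = fun μ : ℝ => (fun ν : ℝ => ‖h₁ ν‖) (-μ) := by
      funext μ
      rw [norm_neg]
    rw [e, integral_neg_eq_self (fun ν : ℝ => ‖h₁ ν‖) volume]
    exact hM₁i
  obtain ⟨Lm, hLm, hLmb⟩ := tail_lemma t δ ht hδpos (fun ν : ℝ => h (-ν))
    (fun μ : ℝ => -(h₁ (-μ))) M M₁ hdneg hcneg hMneg hineg hM₁neg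
  set k : ℝ → ℂ := fun μ => Complex.exp (Complex.I * (t:ℂ) * (μ:ℂ)^2) * h μ with hk_def
  have hnu : ∀ μ : ℝ, ‖Complex.exp (Complex.I * (t:ℂ) * (μ:ℂ)^2)‖ = 1 := by
    intro μ
    have e : Complex.I * (t:ℂ) * (μ:ℂ)^2 = Complex.I * ((t * μ^2 : ℝ) : ℂ) := by
      push_cast
      ring
    rw [e]
    exact norm_exp_I_mul _
  have hucont : Continuous (fun μ : ℝ => Complex.exp (Complex.I * (t:ℂ) * (μ:ℂ)^2)) := by
    apply Complex.continuous_exp.comp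
    fun_prop
  have hkc : Continuous k := hucont.mul hhc
  have hkneg : ∀ ν : ℝ, k (-ν) = Complex.exp (Complex.I * (t:ℂ) * (ν:ℂ)^2) * h (-ν) := by
    intro ν
    rw [hk_def]
    simp only []
    congr 2
    push_cast
    ring
  set Mid : ℂ := ∫ μ in (-δ)..δ, k μ with hMid_def
  have hphase : ∀ lam : ℝ,
      Complex.exp (Complex.I * ((t : ℂ) * (lam : ℂ) ^ 2 + (a : ℂ) * (lam : ℂ))) *
        ((χ (lam ^ 2) * lam ^ m * K : ℝ) : ℂ)
      = Complex.exp (Complex.I * (θ:ℂ)) * k (lam + c0) := by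
    intro lam
    rw [hk_def]
    simp only []
    have hh1 : h (lam + c0) = ((χ (lam ^ 2) * lam ^ m * K : ℝ) : ℂ) := by
      rw [hh_def]
      simp only [add_sub_cancel_right]
      rfl
    rw [hh1, ← mul_assoc, ← Complex.exp_add]
    congr 2
    rw [hθ_def, hc0_def]
    push_cast
    field_simp
    ring
  have horig : ∀ R : ℝ,
      (∫ lam in (-R)..R,
        Complex.exp (Complex.I * ((t : ℂ) * (lam : ℂ) ^ 2 + (a : ℂ) * (lam : ℂ))) *
          ((χ (lam ^ 2) * lam ^ m * K : ℝ) : ℂ))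
      = Complex.exp (Complex.I * (θ:ℂ)) * ∫ μ in (-R + c0)..(R + c0), k μ := by
    intro R
    rw [← intervalIntegral.integral_comp_add_right (fun μ => k μ) c0,
      ← intervalIntegral.integral_const_mul]
    apply intervalIntegral.integral_congr
    intro lam _
    exact hphase lam
  have hik : ∀ u v : ℝ, IntervalIntegrable k volume u v := fun u v => hkc.intervalIntegrable u v
  have hsplitEv : ∀ᶠ R in atTop, (∫ μ in (-R + c0)..(R + c0), k μ)
      = (∫ ν in δ..(R - c0), Complex.exp (Complex.I * (t:ℂ) * (ν:ℂ)^2) * h (-ν))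
        + (Mid + (∫ μ in δ..(R + c0), k μ)) := by
    filter_upwards [eventually_ge_atTop (δ + |c0| + 1)] with R hR
    have hb1 : -R + c0 ≤ -δ := by
      have := le_abs_self c0
      have := neg_abs_le c0
      linarith
    have hb2 : δ ≤ R + c0 := by
      have := neg_abs_le c0
      linarith
    calc (∫ μ in (-R + c0)..(R + c0), k μ)
        = (∫ μ in (-R + c0)..(-δ), k μ) + ∫ μ in (-δ)..(R + c0), k μ :=
          (intervalIntegral.integral_add_adjacent_intervals (hik _ _) (hik _ _)).symm
      _ = (∫ μ in (-R + c0)..(-δ), k μ) + (Mid + ∫ μ in δ..(R + c0), k μ) := by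
          rw [← intervalIntegral.integral_add_adjacent_intervals (hik (-δ) δ) (hik δ (R+c0))]
      _ = (∫ ν in δ..(R - c0), Complex.exp (Complex.I * (t:ℂ) * (ν:ℂ)^2) * h (-ν))
            + (Mid + (∫ μ in δ..(R + c0), k μ)) := by
          congr 1
          have e1 : (∫ ν in δ..(R - c0), Complex.exp (Complex.I * (t:ℂ) * (ν:ℂ)^2) * h (-ν))
              = ∫ ν in δ..(R - c0), k (-ν) := by
            apply intervalIntegral.integral_congr
            intro ν _
            exact (hkneg ν).symm
          rw [e1, intervalIntegral.integral_comp_neg (fun μ => k μ)]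
          have e2 : -(R - c0) = -R + c0 := by ring
          rw [e2]
  have hTm : Tendsto (fun R : ℝ =>
      ∫ ν in δ..(R - c0), Complex.exp (Complex.I * (t:ℂ) * (ν:ℂ)^2) * h (-ν)) atTop (nhds Lm) := by
    have := hLm.comp (tendsto_atTop_add_const_right atTop (-c0) tendsto_id)
    simpa [Function.comp_def, ← sub_eq_add_neg] using this
  have hTp : Tendsto (fun R : ℝ => ∫ μ in δ..(R + c0), k μ) atTop (nhds Lp) := by
    have := hLp.comp (tendsto_atTop_add_const_right atTop c0 tendsto_id)
    simpa [Function.comp_def] using this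
  refine ⟨Complex.exp (Complex.I * (θ:ℂ)) * (Lm + (Mid + Lp)), ?_, ?_⟩
  · have hT : Tendsto (fun R : ℝ => ∫ μ in (-R + c0)..(R + c0), k μ) atTop
        (nhds (Lm + (Mid + Lp))) := by
      refine Tendsto.congr' ?_ (hTm.add (tendsto_const_nhds.add hTp))
      filter_upwards [hsplitEv] with R hR
      exact hR.symm
    have := hT.const_mul (Complex.exp (Complex.I * (θ:ℂ)))
    refine Tendsto.congr (fun R => (horig R).symm) this
  · have hMid : ‖Mid‖ ≤ M * |δ - (-δ)| := by
      rw [hMid_def]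
      apply intervalIntegral.norm_integral_le_of_norm_le_const
      intro x _
      rw [hk_def]
      simp only []
      rw [norm_mul, hnu, one_mul]
      exact hMnorm x
    have habs : |δ - (-δ)| = 2*δ := by
      rw [abs_of_pos (by linarith)]
      ring
    have hts : t ^ (-(1:ℝ)/2) = (Real.sqrt t)⁻¹ := by
      rw [Real.sqrt_eq_rpow, ← Real.rpow_neg ht.le]
      congr 1
      ring
    have htδ : 2*t*δ = 2*Real.sqrt t := by
      rw [hδ_def]
      rw [mul_inv_eq_iff_eq_mul₀ hst.ne']
      nlinarith [Real.mul_self_sqrt ht.le]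
    rw [hts]
    calc ‖Complex.exp (Complex.I * (θ:ℂ)) * (Lm + (Mid + Lp))‖
        = ‖Lm + (Mid + Lp)‖ := by rw [norm_mul, norm_exp_I_mul, one_mul]
      _ ≤ ‖Lm‖ + (‖Mid‖ + ‖Lp‖) :=
          le_trans (norm_add_le _ _) (by gcongr; exact norm_add_le _ _)
      _ ≤ (2*M + M₁)/(2*t*δ) + ((M * |δ - (-δ)|) + (2*M + M₁)/(2*t*δ)) := by
          gcongr
      _ = (4*M + M₁) * (Real.sqrt t)⁻¹ := by
          rw [habs, htδ, hδ_def]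
          field_simp
          ring
end

section
/- Let ω : ℝ → ℂ be a C² function whose support is a compact subset of [0,∞), and let M > 0. There exists a constant C = C(ω, M) such that for every x ≥ 0 and every C² function φ : [0,∞) → ℂ satisfying |φ(λ)| ≤ M, |φ'(λ)| ≤ M, and |φ''(λ)| ≤ M for all λ ≥ 0, the function F(u) := ∫₀^∞ cos(uλ) e^{ixλ} ω(λ) φ(λ) dλ satisfies ∫_ℝ |F(u)| du ≤ C ⟨x⟩. -/
/-!
Because `ω` vanishes on `(-∞, 0)`, the integral over `(0, ∞)` is an integral over `ℝ`, and
`cos (uλ) e^{ixλ} = (e^{i(x+u)λ} + e^{i(x-u)λ}) / 2` turns `F(u)` into the average of the Fourier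
transform of `g = ωφ` at the two frequencies `x ± u`. Two integrations by parts give
`(1 + θ²) |ĝ(θ)| ≤ ‖g‖₁ + ‖g''‖₁`, so `|F(u)|` is dominated by translates of `(1 + θ²)⁻¹`, whose
integral `π` does not depend on `x`. The Leibniz rule bounds `‖g‖₁ + ‖g''‖₁` by `M` times a
constant depending on `ω` only.
-/

open MeasureTheory Real Complex FourierTransform Set Function

section Calculus

variable {𝕜 : Type*} [NontriviallyNormedField 𝕜]

theorem support_deriv_subset_of_isClosed {E : Type*} [NormedAddCommGroup E] [NormedSpace 𝕜 E]
    {f : 𝕜 → E} {s : Set 𝕜} (hs : IsClosed s) (hf : support f ⊆ s) : support (deriv f) ⊆ s :=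
  support_deriv_subset.trans (closure_minimal hf hs)

theorem deriv_deriv_mul {𝔸 : Type*} [NormedCommRing 𝔸] [NormedAlgebra 𝕜 𝔸] {f g : 𝕜 → 𝔸}
    (hf : Differentiable 𝕜 f) (hf' : Differentiable 𝕜 (deriv f))
    (hg : Differentiable 𝕜 g) (hg' : Differentiable 𝕜 (deriv g)) (t : 𝕜) :
    deriv (deriv fun s => f s * g s) t =
      deriv (deriv f) t * g t + 2 * (deriv f t * deriv g t) + f t * deriv (deriv g) t := by
  have hderiv : deriv (fun s => f s * g s) = fun s => deriv f s * g s + f s * deriv g s :=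
    funext fun s => deriv_fun_mul (hf s) (hg s)
  have hderiv' := ((hf' t).hasDerivAt.fun_mul (hg t).hasDerivAt).fun_add
    ((hf t).hasDerivAt.fun_mul (hg' t).hasDerivAt)
  rw [hderiv, hderiv'.deriv]
  ring

end Calculus

section Fourier

theorem norm_fourier_le_integral_norm {E : Type*} [NormedAddCommGroup E] [NormedSpace ℂ E]
    (g : ℝ → E) (ξ : ℝ) : ‖𝓕 g ξ‖ ≤ ∫ t, ‖g t‖ :=
  VectorFourier.norm_fourierIntegral_le_integral_norm _ _ _ _ _

theorem one_add_sq_mul_norm_fourier_le {g : ℝ → ℂ} (hg : ContDiff ℝ 2 g)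
    (hc : HasCompactSupport g) (ξ : ℝ) :
    (1 + (2 * π * ξ) ^ 2) * ‖𝓕 g ξ‖ ≤ (∫ t, ‖g t‖) + ∫ t, ‖deriv (deriv g) t‖ := by
  have hg' : ContDiff ℝ 1 (deriv g) := hg.deriv'
  have hi : Integrable g := hg.continuous.integrable_of_hasCompactSupport hc
  have hi' : Integrable (deriv g) := hg'.continuous.integrable_of_hasCompactSupport hc.deriv
  have hi'' : Integrable (deriv (deriv g)) :=
    hg'.continuous_deriv_one.integrable_of_hasCompactSupport hc.deriv.deriv
  have hfourier : 𝓕 (deriv (deriv g)) ξ = (2 * π * I * ξ) ^ 2 * 𝓕 g ξ := by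
    rw [Real.fourier_deriv hi' (hg'.differentiable one_ne_zero) hi'',
      Real.fourier_deriv hi (hg.differentiable two_ne_zero) hi']
    simp only [smul_eq_mul]
    ring
  have hnorm : ‖𝓕 (deriv (deriv g)) ξ‖ = (2 * π * ξ) ^ 2 * ‖𝓕 g ξ‖ := by
    rw [hfourier, norm_mul, norm_pow, show (2 * π * I * ξ : ℂ) = ((2 * π * ξ : ℝ) : ℂ) * I by
      push_cast; ring, norm_mul, norm_I, mul_one, norm_real, norm_eq_abs, sq_abs]
  calc (1 + (2 * π * ξ) ^ 2) * ‖𝓕 g ξ‖ = ‖𝓕 g ξ‖ + ‖𝓕 (deriv (deriv g)) ξ‖ := by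
        rw [hnorm]; ring
    _ ≤ _ := add_le_add (norm_fourier_le_integral_norm g ξ) (norm_fourier_le_integral_norm _ ξ)

theorem integral_exp_mul_eq_fourier (g : ℝ → ℂ) (θ : ℝ) :
    ∫ t : ℝ, exp (θ * t * I) * g t = 𝓕 g (-(θ / (2 * π))) := by
  rw [Real.fourier_real_eq_integral_exp_smul]
  congr 1
  funext t
  rw [smul_eq_mul]
  congr 3
  push_cast
  field_simp

end Fourier

section CosineTransform

theorem ofReal_cos_mul_exp (u x t : ℝ) :
    (Real.cos (u * t) : ℂ) * exp (I * x * t) =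
      (exp ((x + u) * t * I) + exp ((x - u) * t * I)) / 2 := by
  rw [ofReal_cos, Complex.cos, div_mul_eq_mul_div, add_mul, ← Complex.exp_add, ← Complex.exp_add]
  push_cast
  ring_nf

variable {g : ℝ → ℂ}

theorem setIntegral_Ioi_cos_mul_exp_mul_eq_fourier (hg : Integrable g) (hsupp : support g ⊆ Ici 0)
    (x u : ℝ) :
    ∫ t in Ioi 0, (Real.cos (u * t) : ℂ) * exp (I * x * t) * g t =
      (𝓕 g (-((x + u) / (2 * π))) + 𝓕 g (-((x - u) / (2 * π)))) / 2 := by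
  have hint (θ : ℝ) : Integrable fun t : ℝ => exp (θ * t * I) * g t :=
    hg.bdd_mul (by fun_prop) (.of_forall fun t => by
      rw [← ofReal_mul, norm_exp_ofReal_mul_I])
  rw [← integral_Ici_eq_integral_Ioi, setIntegral_eq_integral_of_forall_compl_eq_zero
    fun t ht => by rw [notMem_support.mp fun h => ht (hsupp h), mul_zero]]
  calc ∫ t, (Real.cos (u * t) : ℂ) * exp (I * x * t) * g t
      = ∫ t : ℝ, (exp ((x + u : ℝ) * t * I) * g t + exp ((x - u : ℝ) * t * I) * g t) / 2 := by
        congr 1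
        funext t
        rw [ofReal_cos_mul_exp]
        push_cast
        ring
    _ = _ := by
        rw [integral_div, integral_add (hint _) (hint _), integral_exp_mul_eq_fourier,
          integral_exp_mul_eq_fourier]

theorem integral_norm_setIntegral_cos_mul_exp_mul_le (hg : ContDiff ℝ 2 g)
    (hc : HasCompactSupport g) (hsupp : support g ⊆ Ici 0) (x : ℝ) :
    ∫ u, ‖∫ t in Ioi 0, (Real.cos (u * t) : ℂ) * exp (I * x * t) * g t‖ ≤
      π * ((∫ t, ‖g t‖) + ∫ t, ‖deriv (deriv g) t‖) := by
  set D := (∫ t, ‖g t‖) + ∫ t, ‖deriv (deriv g) t‖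
  have hdecay (θ : ℝ) : ‖𝓕 g (-(θ / (2 * π)))‖ ≤ D * (1 + θ ^ 2)⁻¹ := by
    have h := one_add_sq_mul_norm_fourier_le hg hc (-(θ / (2 * π)))
    rw [show (2 * π * -(θ / (2 * π))) ^ 2 = θ ^ 2 by field_simp] at h
    rw [← div_eq_mul_inv, le_div_iff₀ (by positivity)]
    linarith
  have hmajorant : Integrable fun u => D / 2 * ((1 + (x + u) ^ 2)⁻¹ + (1 + (x - u) ^ 2)⁻¹) :=
    ((integrable_inv_one_add_sq.comp_add_left x).add
      (integrable_inv_one_add_sq.comp_sub_left x)).const_mul _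
  have hgi : Integrable g := hg.continuous.integrable_of_hasCompactSupport hc
  calc ∫ u, ‖∫ t in Ioi 0, (Real.cos (u * t) : ℂ) * exp (I * x * t) * g t‖
      ≤ ∫ u, D / 2 * ((1 + (x + u) ^ 2)⁻¹ + (1 + (x - u) ^ 2)⁻¹) := by
        refine integral_mono_of_nonneg (.of_forall fun u => norm_nonneg _) hmajorant
          (.of_forall fun u => ?_)
        dsimp only
        rw [setIntegral_Ioi_cos_mul_exp_mul_eq_fourier hgi hsupp, norm_div, Complex.norm_two]
        have := norm_add_le (𝓕 g (-((x + u) / (2 * π)))) (𝓕 g (-((x - u) / (2 * π))))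
        linarith [hdecay (x + u), hdecay (x - u)]
    _ = π * D := by
        rw [integral_const_mul, integral_add (integrable_inv_one_add_sq.comp_add_left x)
          (integrable_inv_one_add_sq.comp_sub_left x),
          integral_add_left_eq_self (fun t => (1 + t ^ 2)⁻¹) x,
          integral_sub_left_eq_self (fun t => (1 + t ^ 2)⁻¹) volume x, integral_univ_inv_one_add_sq]
        ring

end CosineTransform

section Product

variable {ω φ : ℝ → ℂ} {M : ℝ}

theorem norm_mul_le_of_support_subset_Ici (hω : support ω ⊆ Ici 0)
    (hφ : ∀ t, 0 ≤ t → ‖φ t‖ ≤ M) (t : ℝ) : ‖ω t * φ t‖ ≤ M * ‖ω t‖ := by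
  by_cases ht : ω t = 0
  · simp [ht]
  · rw [norm_mul, mul_comm]
    exact mul_le_mul_of_nonneg_right (hφ t (hω ht)) (norm_nonneg _)

theorem norm_mul_add_norm_deriv_deriv_mul_le (hω : ContDiff ℝ 2 ω) (hφ : ContDiff ℝ 2 φ)
    (hsupp : support ω ⊆ Ici 0)
    (hφb : ∀ t, 0 ≤ t → ‖φ t‖ ≤ M ∧ ‖deriv φ t‖ ≤ M ∧ ‖deriv (deriv φ) t‖ ≤ M) (t : ℝ) :
    ‖ω t * φ t‖ + ‖deriv (deriv fun s => ω s * φ s) t‖ ≤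
      M * (2 * ‖ω t‖ + 2 * ‖deriv ω t‖ + ‖deriv (deriv ω) t‖) := by
  have hsupp' := support_deriv_subset_of_isClosed isClosed_Ici hsupp
  have hsupp'' := support_deriv_subset_of_isClosed isClosed_Ici hsupp'
  have h0 := norm_mul_le_of_support_subset_Ici hsupp (fun s hs => (hφb s hs).1) t
  have h1 := norm_mul_le_of_support_subset_Ici hsupp' (fun s hs => (hφb s hs).2.1) t
  have h2 := norm_mul_le_of_support_subset_Ici hsupp'' (fun s hs => (hφb s hs).1) t
  have h3 := norm_mul_le_of_support_subset_Ici hsupp (fun s hs => (hφb s hs).2.2) t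
  rw [deriv_deriv_mul (hω.differentiable two_ne_zero) (hω.deriv'.differentiable one_ne_zero)
    (hφ.differentiable two_ne_zero) (hφ.deriv'.differentiable one_ne_zero)]
  have := norm_add₃_le (a := deriv (deriv ω) t * φ t) (b := 2 * (deriv ω t * deriv φ t))
    (c := ω t * deriv (deriv φ) t)
  rw [norm_mul (2 : ℂ), Complex.norm_two] at this
  linarith

theorem integral_norm_mul_add_integral_norm_deriv_deriv_mul_le (hω : ContDiff ℝ 2 ω)
    (hωc : HasCompactSupport ω) (hφ : ContDiff ℝ 2 φ) (hsupp : support ω ⊆ Ici 0)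
    (hφb : ∀ t, 0 ≤ t → ‖φ t‖ ≤ M ∧ ‖deriv φ t‖ ≤ M ∧ ‖deriv (deriv φ) t‖ ≤ M) :
    (∫ t, ‖ω t * φ t‖) + ∫ t, ‖deriv (deriv fun s => ω s * φ s) t‖ ≤
      M * ∫ t, (2 * ‖ω t‖ + 2 * ‖deriv ω t‖ + ‖deriv (deriv ω) t‖) := by
  have hg : ContDiff ℝ 2 fun s => ω s * φ s := hω.mul hφ
  have hgc : HasCompactSupport fun s => ω s * φ s := hωc.mul_right
  have hω' : ContDiff ℝ 1 (deriv ω) := hω.deriv'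
  have hg' : ContDiff ℝ 1 (deriv fun s => ω s * φ s) := hg.deriv'
  have hgi : Integrable fun s => ‖ω s * φ s‖ :=
    (hg.continuous.integrable_of_hasCompactSupport hgc).norm
  have hgi'' : Integrable fun s => ‖deriv (deriv fun s => ω s * φ s) s‖ :=
    (hg'.continuous_deriv_one.integrable_of_hasCompactSupport hgc.deriv.deriv).norm
  have hωi : Integrable fun t => 2 * ‖ω t‖ + 2 * ‖deriv ω t‖ + ‖deriv (deriv ω) t‖ :=
    (((hω.continuous.integrable_of_hasCompactSupport hωc).norm.const_mul 2).add
      ((hω'.continuous.integrable_of_hasCompactSupport hωc.deriv).norm.const_mul 2)).add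
      (hω'.continuous_deriv_one.integrable_of_hasCompactSupport hωc.deriv.deriv).norm
  rw [← integral_add hgi hgi'', ← integral_const_mul]
  exact integral_mono (hgi.add hgi'') (hωi.const_mul M)
    (norm_mul_add_norm_deriv_deriv_mul_le hω hφ hsupp hφb)

end Product

theorem stmt_9_general (ω : ℝ → ℂ) (hω : ContDiff ℝ 2 ω) (hωc : HasCompactSupport ω)
    (hωsupp : Function.support ω ⊆ Set.Ici (0 : ℝ)) (M : ℝ) :
    ∃ C : ℝ, ∀ x : ℝ, 0 ≤ x → ∀ φ : ℝ → ℂ, ContDiff ℝ 2 φ →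
      (∀ lam : ℝ, 0 ≤ lam →
        ‖φ lam‖ ≤ M ∧ ‖deriv φ lam‖ ≤ M ∧ ‖deriv (deriv φ) lam‖ ≤ M) →
      (∫ u : ℝ, ‖∫ lam in Set.Ioi (0 : ℝ),
          ((Real.cos (u * lam) : ℝ) : ℂ) * Complex.exp (Complex.I * (x : ℂ) * (lam : ℂ)) *
            ω lam * φ lam‖)
        ≤ C * Real.sqrt (1 + x ^ 2) := by
  set C := π * (M * ∫ t, (2 * ‖ω t‖ + 2 * ‖deriv ω t‖ + ‖deriv (deriv ω) t‖))
  refine ⟨C, fun x _ φ hφ hφb => ?_⟩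
  have hcos := integral_norm_setIntegral_cos_mul_exp_mul_le (hω.mul hφ) hωc.mul_right
    ((support_mul_subset_left ω φ).trans hωsupp) x
  have hL1 := integral_norm_mul_add_integral_norm_deriv_deriv_mul_le hω hωc hφ hωsupp hφb
  simp only [← mul_assoc] at hcos
  have hbound : _ ≤ C := hcos.trans (mul_le_mul_of_nonneg_left hL1 pi_pos.le)
  have hsqrt : 1 ≤ √(1 + x ^ 2) := one_le_sqrt.2 (le_add_of_nonneg_right (sq_nonneg x))
  exact hbound.trans
    (le_mul_of_one_le_right ((integral_nonneg fun _ => norm_nonneg _).trans hbound) hsqrt)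

/-- weighted `L¹`-bound for the cosine transform: for a compactly supported
`C²` function `ω` with support in `[0,∞)` and any `C²` function `φ` with `φ, φ', φ''`
bounded by `M` on `[0,∞)`, the function
`F(u) = ∫₀^∞ cos(uλ) e^{ixλ} ω(λ) φ(λ) dλ` satisfies `∫ |F(u)| du ≤ C ⟨x⟩`
uniformly in `x ≥ 0`, with `C = C(ω, M)`. -/
theorem stmt_9 (ω : ℝ → ℂ) (hω : ContDiff ℝ 2 ω) (hωc : HasCompactSupport ω)
    (hωsupp : Function.support ω ⊆ Set.Ici (0 : ℝ)) (M : ℝ) (hM : 0 < M) :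
    ∃ C : ℝ, ∀ x : ℝ, 0 ≤ x → ∀ φ : ℝ → ℂ, ContDiff ℝ 2 φ →
      (∀ lam : ℝ, 0 ≤ lam →
        ‖φ lam‖ ≤ M ∧ ‖deriv φ lam‖ ≤ M ∧ ‖deriv (deriv φ) lam‖ ≤ M) →
      (∫ u : ℝ, ‖∫ lam in Set.Ioi (0 : ℝ),
          ((Real.cos (u * lam) : ℝ) : ℂ) * Complex.exp (Complex.I * (x : ℂ) * (lam : ℂ)) *
            ω lam * φ lam‖)
        ≤ C * Real.sqrt (1 + x ^ 2) :=
  stmt_9_general ω hω hωc hωsupp M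
end

section
/- Let ω : ℝ → ℂ be a C² function whose support is a compact subset of [0,∞), let M > 0, let x ≥ 0, and let φ : [0,∞) → ℂ be C² with |φ(λ)|, |φ'(λ)|, |φ''(λ)| ≤ M for all λ ≥ 0. Set F(u) := ∫₀^∞ cos(uλ) e^{ixλ} ω(λ) φ(λ) dλ. Then there is C = C(ω, M) such that: (i) |F(u)| ≤ C for all u ∈ ℝ with | |u| − x | ≤ x, and (ii) |F(u)| ≤ C ( x/|x² − u²| + |u + x|^{−2} + |u − x|^{−2} ) for all u ∈ ℝ with | |u| − x | > x. -/
/-!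
Since `ω` is supported in `[0, ∞)`, so is `G = ω φ`, and the integral over `(0, ∞)` is an
integral over `ℝ` of a compactly supported `C²` function. Writing
`cos (u λ) e^{i x λ} = (e^{i (x + u) λ} + e^{i (x - u) λ}) / 2` expresses `F(u)` through the
Fourier transform of `G` at `x ± u`, and the Fourier transform of `G''` is `-(x ± u)²` times
it, which gives the decay `‖G''‖₁ / (x ± u)²`. The Leibniz rule together with the bounds on
`φ` controls `‖G''‖₁` by `M ∫ (|ω| + 2|ω'| + |ω''|)`; the trivial bound `‖G‖₁` gives (i).
No boundary term at `λ = 0` occurs because `G` vanishes on `(-∞, 0)` and is `C²` on `ℝ`.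
-/

open MeasureTheory Complex FourierTransform

theorem HasCompactSupport.iteratedDeriv {E : Type*} [NormedAddCommGroup E]
    [NormedSpace ℝ E] {G : ℝ → E} (hG : HasCompactSupport G) (n : ℕ) :
    HasCompactSupport (iteratedDeriv n G) := by
  rw [iteratedDeriv_eq_iterate]
  induction n with
  | zero => exact hG
  | succ n ih => rw [Function.iterate_succ_apply']; exact ih.deriv

theorem HasCompactSupport.integrable_iteratedDeriv {E : Type*} [NormedAddCommGroup E]
    [NormedSpace ℝ E] {G : ℝ → E} {N : ℕ∞} (hGc : HasCompactSupport G) (hG : ContDiff ℝ N G)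
    {n : ℕ} (hn : n ≤ N) : Integrable (_root_.iteratedDeriv n G) :=
  (hG.continuous_iteratedDeriv n (by exact_mod_cast hn)).integrable_of_hasCompactSupport
    (hGc.iteratedDeriv n)

theorem iteratedDeriv_eq_zero_of_support_subset_Ici {E : Type*} [NormedAddCommGroup E]
    [NormedSpace ℝ E] {f : ℝ → E} (hf : Function.support f ⊆ Set.Ici 0) (n : ℕ) {t : ℝ}
    (ht : t < 0) : iteratedDeriv n f t = 0 := by
  have hzero : f =ᶠ[nhds t] 0 := Filter.eventually_of_mem (Iio_mem_nhds ht) fun s hs =>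
    Function.notMem_support.mp fun h => hs.not_ge (Set.mem_Ici.mp (hf h))
  simpa using (hzero.iteratedDeriv n).eq_of_nhds

theorem norm_iteratedDeriv_two_mul_le {𝕜 𝔸 : Type*} [NontriviallyNormedField 𝕜]
    [NormedRing 𝔸] [NormOneClass 𝔸] [NormedAlgebra 𝕜 𝔸] {f g : 𝕜 → 𝔸} (hf : ContDiff 𝕜 2 f)
    (hg : ContDiff 𝕜 2 g) (t : 𝕜) :
    ‖iteratedDeriv 2 (f * g) t‖ ≤ ‖f t‖ * ‖iteratedDeriv 2 g t‖ +
      2 * ‖deriv f t‖ * ‖deriv g t‖ + ‖iteratedDeriv 2 f t‖ * ‖g t‖ := by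
  rw [iteratedDeriv_mul hf.contDiffAt hg.contDiffAt]
  simp only [Finset.sum_range_succ, Finset.sum_range_zero, Nat.choose, Nat.cast_one,
    Nat.cast_ofNat, one_mul, zero_add, tsub_zero, Nat.reduceAdd, Nat.add_one_sub_one, tsub_self,
    iteratedDeriv_zero, iteratedDeriv_one]
  have htwo : ‖(2 : 𝔸)‖ ≤ 2 := by simpa using Nat.norm_cast_le (α := 𝔸) 2
  refine norm_add₃_le.trans (add_le_add_three (norm_mul_le _ _) ?_ (norm_mul_le _ _))
  exact norm_mul₃_le.trans (by gcongr)

section FourierDecay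

variable {E : Type*} [NormedAddCommGroup E] [NormedSpace ℂ E]

theorem integral_cexp_smul_eq_fourier (G : ℝ → E) (a : ℝ) :
    ∫ t : ℝ, cexp (I * a * t) • G t = 𝓕 G (-(a / (2 * Real.pi))) := by
  rw [Real.fourier_real_eq_integral_exp_smul]
  congr with t
  congr 2
  push_cast
  field_simp

theorem norm_integral_cexp_smul_le_div_sq {G : ℝ → E} (hG : ContDiff ℝ 2 G)
    (hGc : HasCompactSupport G) {a : ℝ} (ha : a ≠ 0) :
    ‖∫ t : ℝ, cexp (I * a * t) • G t‖ ≤ (∫ t : ℝ, ‖iteratedDeriv 2 G t‖) / a ^ 2 := by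
  have hfourier := congrFun
    (Real.fourier_iteratedDeriv hG (fun _ => hGc.integrable_iteratedDeriv hG) le_rfl)
    (-(a / (2 * Real.pi)))
  have hfactor : ‖(2 * Real.pi * I * ↑(-(a / (2 * Real.pi))) : ℂ) ^ 2‖ = a ^ 2 := by
    rw [norm_pow, ← sq_abs a]
    congr 1
    simp only [ofReal_neg, ofReal_div, ofReal_mul, ofReal_ofNat, mul_neg, norm_neg,
      Complex.norm_mul, norm_ofNat, norm_real, Real.norm_eq_abs, abs_of_pos Real.pi_pos, norm_I,
      mul_one, Complex.norm_div]
    field_simp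
  rw [integral_cexp_smul_eq_fourier, le_div_iff₀ (by positivity), mul_comm, ← hfactor,
    ← norm_smul, ← hfourier]
  exact VectorFourier.norm_fourierIntegral_le_integral_norm _ _ _ _ _

end FourierDecay

theorem ofReal_cos_mul_cexp_eq (u x t : ℝ) :
    (Real.cos (u * t) : ℂ) * cexp (I * x * t) =
      (cexp (I * ↑(x + u) * t) + cexp (I * ↑(x - u) * t)) / 2 := by
  rw [ofReal_cos, Complex.cos, div_mul_eq_mul_div, add_mul, ← exp_add, ← exp_add]
  push_cast
  ring_nf

section CosineTransform

variable {G : ℝ → ℂ}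

theorem integral_Ioi_cos_mul_cexp_mul_eq (hG : Continuous G) (hGc : HasCompactSupport G)
    (hGsupp : Function.support G ⊆ Set.Ici 0) (u x : ℝ) :
    ∫ t in Set.Ioi 0, (Real.cos (u * t) : ℂ) * cexp (I * x * t) * G t =
      ((∫ t : ℝ, cexp (I * ↑(x + u) * t) * G t) +
        ∫ t : ℝ, cexp (I * ↑(x - u) * t) * G t) / 2 := by
  have hint (a : ℝ) : Integrable fun t : ℝ => cexp (I * a * t) * G t :=
    (by fun_prop : Continuous fun t : ℝ => cexp (I * a * t) * G t).integrable_of_hasCompactSupport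
      hGc.mul_left
  rw [← integral_Ici_eq_integral_Ioi, setIntegral_eq_integral_of_forall_compl_eq_zero
    fun t ht => by simp [Function.notMem_support.mp (mt (@hGsupp t) ht)],
    ← integral_add (hint _) (hint _), ← integral_div]
  congr with t
  rw [ofReal_cos_mul_cexp_eq]
  ring

theorem norm_integral_Ioi_cos_mul_cexp_mul_le_integral_norm (hG : Integrable G) (u x : ℝ) :
    ‖∫ t in Set.Ioi 0, (Real.cos (u * t) : ℂ) * cexp (I * x * t) * G t‖ ≤ ∫ t, ‖G t‖ := by
  have hbound (t : ℝ) : ‖(Real.cos (u * t) : ℂ) * cexp (I * x * t) * G t‖ ≤ ‖G t‖ := by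
    have hexp : ‖cexp (I * x * t)‖ = 1 := by
      rw [show I * x * t = ↑(x * t) * I by push_cast; ring]
      exact norm_exp_ofReal_mul_I _
    rw [norm_mul, norm_mul, hexp, mul_one, norm_real, Real.norm_eq_abs]
    exact mul_le_of_le_one_left (norm_nonneg _) (Real.abs_cos_le_one _)
  exact (norm_integral_le_of_norm_le hG.norm.integrableOn (.of_forall hbound)).trans
    (setIntegral_le_integral hG.norm (.of_forall fun t => norm_nonneg _))

theorem norm_integral_Ioi_cos_mul_cexp_mul_le (hG : ContDiff ℝ 2 G)
    (hGc : HasCompactSupport G) (hGsupp : Function.support G ⊆ Set.Ici 0) {u x : ℝ}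
    (hplus : x + u ≠ 0) (hminus : x - u ≠ 0) :
    ‖∫ t in Set.Ioi 0, (Real.cos (u * t) : ℂ) * cexp (I * x * t) * G t‖ ≤
      (∫ t, ‖iteratedDeriv 2 G t‖) / 2 * ((|u + x| ^ 2)⁻¹ + (|u - x| ^ 2)⁻¹) := by
  rw [integral_Ioi_cos_mul_cexp_mul_eq hG.continuous hGc hGsupp, norm_div, RCLike.norm_ofNat]
  have hdecay_plus := norm_integral_cexp_smul_le_div_sq hG hGc hplus
  have hdecay_minus := norm_integral_cexp_smul_le_div_sq hG hGc hminus
  simp only [smul_eq_mul] at hdecay_plus hdecay_minus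
  calc _ ≤ ((∫ t, ‖iteratedDeriv 2 G t‖) / (x + u) ^ 2 +
        (∫ t, ‖iteratedDeriv 2 G t‖) / (x - u) ^ 2) / 2 := by
        gcongr
        exact (norm_add_le _ _).trans (add_le_add hdecay_plus hdecay_minus)
    _ = _ := by rw [sq_abs, sq_abs]; ring

end CosineTransform

theorem add_ne_zero_and_sub_ne_zero_of_lt_abs_abs_sub {x u : ℝ} (hx : 0 ≤ x)
    (hu : x < |(|u| - x)|) : x + u ≠ 0 ∧ x - u ≠ 0 := by
  refine ⟨fun h => ?_, fun h => ?_⟩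
  · rw [show u = -x by linarith, abs_neg, abs_of_nonneg hx, sub_self, abs_zero] at hu
    linarith
  · rw [show u = x by linarith, abs_of_nonneg hx, sub_self, abs_zero] at hu
    linarith

noncomputable def leibnizWeight (ω : ℝ → ℂ) (t : ℝ) : ℝ :=
  ‖ω t‖ + 2 * ‖deriv ω t‖ + ‖iteratedDeriv 2 ω t‖

section CutoffProduct

variable {ω φ : ℝ → ℂ} {M : ℝ}

theorem integrable_leibnizWeight (hω : ContDiff ℝ 2 ω) (hωc : HasCompactSupport ω) :
    Integrable (leibnizWeight ω) := by
  have hint (n : ℕ) (hn : n ≤ 2) : Integrable (iteratedDeriv n ω) :=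
    hωc.integrable_iteratedDeriv hω (by exact_mod_cast hn)
  have hderiv := hint 1 one_le_two
  rw [iteratedDeriv_one] at hderiv
  exact ((hint 0 zero_le_two).norm.add (hderiv.norm.const_mul 2)).add (hint 2 le_rfl).norm

theorem leibnizWeight_nonneg (ω : ℝ → ℂ) (t : ℝ) : 0 ≤ leibnizWeight ω t := by
  unfold leibnizWeight
  positivity

theorem norm_mul_le_mul_leibnizWeight (hωsupp : Function.support ω ⊆ Set.Ici 0)
    (hφb : ∀ t, 0 ≤ t → ‖φ t‖ ≤ M) (t : ℝ) : ‖ω t * φ t‖ ≤ M * leibnizWeight ω t := by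
  have hM : 0 ≤ M := (norm_nonneg _).trans (hφb 0 le_rfl)
  by_cases ht : 0 ≤ t
  · calc ‖ω t * φ t‖ ≤ M * ‖ω t‖ := by
          rw [norm_mul, mul_comm M]
          gcongr
          exact hφb t ht
      _ ≤ M * leibnizWeight ω t := by
        unfold leibnizWeight
        gcongr
        linarith [norm_nonneg (deriv ω t), norm_nonneg (iteratedDeriv 2 ω t)]
  · rw [Function.notMem_support.mp (mt (@hωsupp t) ht), zero_mul, norm_zero]
    exact mul_nonneg hM (leibnizWeight_nonneg ω t)

theorem norm_iteratedDeriv_two_mul_le_mul_leibnizWeight (hω : ContDiff ℝ 2 ω)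
    (hωsupp : Function.support ω ⊆ Set.Ici 0) (hφ : ContDiff ℝ 2 φ)
    (hφb : ∀ t, 0 ≤ t → ‖φ t‖ ≤ M ∧ ‖deriv φ t‖ ≤ M ∧ ‖iteratedDeriv 2 φ t‖ ≤ M) (t : ℝ) :
    ‖iteratedDeriv 2 (ω * φ) t‖ ≤ M * leibnizWeight ω t := by
  rcases lt_or_ge t 0 with ht | ht
  · have hM : 0 ≤ M := (norm_nonneg _).trans (hφb 0 le_rfl).1
    have hsupp : Function.support (ω * φ) ⊆ Set.Ici 0 :=
      (Function.support_mul_subset_left ω φ).trans hωsupp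
    rw [iteratedDeriv_eq_zero_of_support_subset_Ici hsupp 2 ht, norm_zero]
    exact mul_nonneg hM (leibnizWeight_nonneg ω t)
  · obtain ⟨h0, h1, h2⟩ := hφb t ht
    calc _ ≤ ‖ω t‖ * ‖iteratedDeriv 2 φ t‖ + 2 * ‖deriv ω t‖ * ‖deriv φ t‖ +
          ‖iteratedDeriv 2 ω t‖ * ‖φ t‖ := norm_iteratedDeriv_two_mul_le hω hφ t
      _ ≤ ‖ω t‖ * M + 2 * ‖deriv ω t‖ * M + ‖iteratedDeriv 2 ω t‖ * M := by gcongr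
      _ = M * leibnizWeight ω t := by unfold leibnizWeight; ring

end CutoffProduct

theorem stmt_10_general (ω : ℝ → ℂ) (hω : ContDiff ℝ 2 ω) (hωc : HasCompactSupport ω)
    (hωsupp : Function.support ω ⊆ Set.Ici (0 : ℝ)) (M : ℝ) :
    ∃ C : ℝ, ∀ x : ℝ, 0 ≤ x → ∀ φ : ℝ → ℂ, ContDiff ℝ 2 φ →
      (∀ lam : ℝ, 0 ≤ lam →
        ‖φ lam‖ ≤ M ∧ ‖deriv φ lam‖ ≤ M ∧ ‖deriv (deriv φ) lam‖ ≤ M) →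
      (∀ u : ℝ, |(|u| - x)| ≤ x →
        ‖∫ lam in Set.Ioi (0 : ℝ),
            ((Real.cos (u * lam) : ℝ) : ℂ) * Complex.exp (Complex.I * (x : ℂ) * (lam : ℂ)) *
              ω lam * φ lam‖ ≤ C) ∧
      (∀ u : ℝ, x < |(|u| - x)| →
        ‖∫ lam in Set.Ioi (0 : ℝ),
            ((Real.cos (u * lam) : ℝ) : ℂ) * Complex.exp (Complex.I * (x : ℂ) * (lam : ℂ)) *
              ω lam * φ lam‖
          ≤ C * (x / |x ^ 2 - u ^ 2| + (|u + x| ^ 2)⁻¹ + (|u - x| ^ 2)⁻¹)) := by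
  set K := ∫ t, leibnizWeight ω t
  refine ⟨M * K, fun x hx φ hφ hφb => ?_⟩
  have hφb' : ∀ t, 0 ≤ t → ‖φ t‖ ≤ M ∧ ‖deriv φ t‖ ≤ M ∧ ‖iteratedDeriv 2 φ t‖ ≤ M := by
    simpa only [iteratedDeriv_succ, iteratedDeriv_zero] using hφb
  have hG : ContDiff ℝ 2 (ω * φ) := hω.mul hφ
  have hGc : HasCompactSupport (ω * φ) := hωc.mul_right
  have hGsupp : Function.support (ω * φ) ⊆ Set.Ici 0 :=
    (Function.support_mul_subset_left ω φ).trans hωsupp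
  have hle_K (f : ℝ → ℂ) (hf : ∀ t, ‖f t‖ ≤ M * leibnizWeight ω t) :
      ∫ t, ‖f t‖ ≤ M * K :=
    (integral_mono_of_nonneg (.of_forall fun t => norm_nonneg _)
      ((integrable_leibnizWeight hω hωc).const_mul M) (.of_forall hf)).trans_eq
      (integral_const_mul _ _)
  have hL := hle_K _ (norm_iteratedDeriv_two_mul_le_mul_leibnizWeight hω hωsupp hφ hφb')
  have hL0 : 0 ≤ ∫ t, ‖iteratedDeriv 2 (ω * φ) t‖ := integral_nonneg fun t => norm_nonneg _
  simp only [mul_assoc _ (ω _), ← Pi.mul_apply ω φ]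
  refine ⟨fun u _ => ?_, fun u hu => ?_⟩
  · exact (norm_integral_Ioi_cos_mul_cexp_mul_le_integral_norm
      (hG.continuous.integrable_of_hasCompactSupport hGc) u x).trans
      (hle_K _ (norm_mul_le_mul_leibnizWeight hωsupp fun t ht => (hφb t ht).1))
  · obtain ⟨hplus, hminus⟩ := add_ne_zero_and_sub_ne_zero_of_lt_abs_abs_sub hx hu
    calc _ ≤ (∫ t, ‖iteratedDeriv 2 (ω * φ) t‖) / 2 *
          ((|u + x| ^ 2)⁻¹ + (|u - x| ^ 2)⁻¹) :=
          norm_integral_Ioi_cos_mul_cexp_mul_le hG hGc hGsupp hplus hminus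
      _ ≤ M * K * ((|u + x| ^ 2)⁻¹ + (|u - x| ^ 2)⁻¹) := by gcongr; linarith
      _ ≤ _ := mul_le_mul_of_nonneg_left
          (by linarith [div_nonneg hx (abs_nonneg (x ^ 2 - u ^ 2))]) (hL0.trans hL)

/-- pointwise bounds for `F(u) = ∫₀^∞ cos(uλ) e^{ixλ} ω(λ) φ(λ) dλ`:
with `ω` a `C²` function compactly supported in `[0,∞)` and `φ` a `C²` function with
`φ, φ', φ''` bounded by `M` on `[0,∞)`, there is `C = C(ω, M)` such that for `x ≥ 0`:
(i) `|F(u)| ≤ C` whenever `||u| - x| ≤ x`, and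
(ii) `|F(u)| ≤ C (x/|x²-u²| + |u+x|⁻² + |u-x|⁻²)` whenever `||u| - x| > x`. -/
theorem stmt_10 (ω : ℝ → ℂ) (hω : ContDiff ℝ 2 ω) (hωc : HasCompactSupport ω)
    (hωsupp : Function.support ω ⊆ Set.Ici (0 : ℝ)) (M : ℝ) (hM : 0 < M) :
    ∃ C : ℝ, ∀ x : ℝ, 0 ≤ x → ∀ φ : ℝ → ℂ, ContDiff ℝ 2 φ →
      (∀ lam : ℝ, 0 ≤ lam →
        ‖φ lam‖ ≤ M ∧ ‖deriv φ lam‖ ≤ M ∧ ‖deriv (deriv φ) lam‖ ≤ M) →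
      (∀ u : ℝ, |(|u| - x)| ≤ x →
        ‖∫ lam in Set.Ioi (0 : ℝ),
            ((Real.cos (u * lam) : ℝ) : ℂ) * Complex.exp (Complex.I * (x : ℂ) * (lam : ℂ)) *
              ω lam * φ lam‖ ≤ C) ∧
      (∀ u : ℝ, x < |(|u| - x)| →
        ‖∫ lam in Set.Ioi (0 : ℝ),
            ((Real.cos (u * lam) : ℝ) : ℂ) * Complex.exp (Complex.I * (x : ℂ) * (lam : ℂ)) *
              ω lam * φ lam‖
          ≤ C * (x / |x ^ 2 - u ^ 2| + (|u + x| ^ 2)⁻¹ + (|u - x| ^ 2)⁻¹)) :=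
  stmt_10_general ω hω hωc hωsupp M
end
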